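/- arXiv:2406.04078 — 11 statements merged into one kernel-verified Lean document; each statement's English description precedes it below -/
import Mathlib

section
/- Let c₁, c₂, c₃, c₄ be four coplanar points in ℝ³ (i.e., points lying on a common affine plane). Then there are no sets X₁, X₂, X₃, X₄ covering ℝ³ such that each X_i is a spray with center c_i. -/
open Set Cardinal

local notation "⟪" x ", " y "⟫" => @inner ℝ _ _ x y

-- uncountability of Ioo
lemma ioo_uncount : ¬ (Set.Ioo (0:ℝ) 1).Countable := by
  intro h
  have h1 : #(Set.Ioo (0:ℝ) 1) = Cardinal.continuum :=
    Cardinal.mk_Ioo_real (by norm_num : (0:ℝ) < 1)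
  have h2 : #(Set.Ioo (0:ℝ) 1) ≤ Cardinal.aleph0 := h.le_aleph0
  rw [h1] at h2
  exact absurd h2 (not_le.mpr Cardinal.aleph0_lt_continuum)

-- the grid pigeonhole lemma
lemma grid {α : Type*} (g : ℝ → ℝ → α) (A B : Set α)
    (hA : ∀ s ∈ Ioo (0:ℝ) 1, {t ∈ Ioo (0:ℝ) 1 | g s t ∈ A}.Finite)
    (hB : ∀ t ∈ Ioo (0:ℝ) 1, {s ∈ Ioo (0:ℝ) 1 | g s t ∈ B}.Finite)
    (hcov : ∀ s ∈ Ioo (0:ℝ) 1, ∀ t ∈ Ioo (0:ℝ) 1, g s t ∈ A ∪ B) : False := by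
  classical
  have hm : ∃ m : ℕ, ¬ {t ∈ Ioo (0:ℝ) 1 | ({s ∈ Ioo (0:ℝ) 1 | g s t ∈ B}).ncard = m}.Countable := by
    by_contra hc
    push_neg at hc
    have hcU : (⋃ m : ℕ,
        {t ∈ Ioo (0:ℝ) 1 | ({s ∈ Ioo (0:ℝ) 1 | g s t ∈ B}).ncard = m}).Countable :=
      Set.countable_iUnion (fun m : ℕ => hc m)
    have hsub : Ioo (0:ℝ) 1 ⊆ ⋃ m : ℕ,
        {t ∈ Ioo (0:ℝ) 1 | ({s ∈ Ioo (0:ℝ) 1 | g s t ∈ B}).ncard = m} := by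
      intro t ht
      exact Set.mem_iUnion.mpr ⟨({s ∈ Ioo (0:ℝ) 1 | g s t ∈ B}).ncard, Set.mem_sep ht rfl⟩
    exact ioo_uncount (Set.Countable.mono hsub hcU)
  obtain ⟨m, hm⟩ := hm
  set T' := {t ∈ Ioo (0:ℝ) 1 | ({s ∈ Ioo (0:ℝ) 1 | g s t ∈ B}).ncard = m} with hT'
  obtain ⟨fs, hfsS, hfsfin, hfscard⟩ :=
    (Set.Ioo_infinite (by norm_num : (0:ℝ) < 1)).exists_subset_ncard_eq (m+1)
  have key : T' ⊆ ⋃ s ∈ fs, {t ∈ Ioo (0:ℝ) 1 | g s t ∈ A} := by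
    rintro t ⟨ht, hcard⟩
    have hBt : {s ∈ Ioo (0:ℝ) 1 | g s t ∈ B}.Finite := hB t ht
    have : ∃ s ∈ fs, g s t ∈ A := by
      by_contra hno
      push_neg at hno
      have hsub : fs ⊆ {s ∈ Ioo (0:ℝ) 1 | g s t ∈ B} := by
        intro s hs
        have hsI : s ∈ Ioo (0:ℝ) 1 := hfsS hs
        rcases hcov s hsI t ht with h | h
        · exact absurd h (hno s hs)
        · exact ⟨hsI, h⟩
      have := Set.ncard_le_ncard hsub hBt
      omega
    obtain ⟨s, hs, hA'⟩ := this
    exact Set.mem_biUnion hs ⟨ht, hA'⟩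
  have : T'.Finite :=
    (Set.Finite.biUnion hfsfin (fun s hs => hA s (hfsS hs))).subset key
  exact hm this.countable

-- existence of a perpendicular vector inside a 2-dimensional submodule
lemma exists_perp' {E : Type*} [NormedAddCommGroup E] [InnerProductSpace ℝ E]
    [FiniteDimensional ℝ E]
    (V : Submodule ℝ E) (hV : Module.finrank ℝ V = 2) (a : E) :
    ∃ e, e ∈ V ∧ e ≠ 0 ∧ ⟪e, a⟫ = 0 := by
  by_cases ha : a = 0
  · have hVne : V ≠ ⊥ := by
      intro h
      rw [h, finrank_bot] at hV
      omega
    obtain ⟨e, heV, he0⟩ := Submodule.exists_mem_ne_zero_of_ne_bot hVne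
    exact ⟨e, heV, he0, by simp [ha]⟩
  · set W := (ℝ ∙ a)ᗮ with hW
    have h1 : Module.finrank ℝ (ℝ ∙ a) + Module.finrank ℝ W = Module.finrank ℝ E :=
      Submodule.finrank_add_finrank_orthogonal (K := ℝ ∙ a)
    have h2 : Module.finrank ℝ (ℝ ∙ a) = 1 := finrank_span_singleton ha
    have h3 := Submodule.finrank_sup_add_finrank_inf_eq V W
    have h4 : Module.finrank ℝ ↥(V ⊔ W) ≤ Module.finrank ℝ E := Submodule.finrank_le _
    have h5 : 0 < Module.finrank ℝ ↥(V ⊓ W) := by omega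
    have hne : V ⊓ W ≠ ⊥ := by
      intro h
      rw [h, finrank_bot] at h5
      omega
    obtain ⟨e, heVW, he0⟩ := Submodule.exists_mem_ne_zero_of_ne_bot hne
    have heW : e ∈ W := (Submodule.mem_inf.mp heVW).2
    refine ⟨e, (Submodule.mem_inf.mp heVW).1, he0, ?_⟩
    have h6 := (Submodule.mem_orthogonal (ℝ ∙ a) e).mp heW a (Submodule.mem_span_singleton_self a)
    rw [real_inner_comm] at h6
    exact h6



lemma aux {E : Type*} [NormedAddCommGroup E] [InnerProductSpace ℝ E]
    [FiniteDimensional ℝ E] (hdim : Module.finrank ℝ E = 3)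
    (c : Fin 4 → E) (V : Submodule ℝ E) (hV : Module.finrank ℝ V = 2)
    (hc : ∀ i, c i - c 0 ∈ V)
    (X : Fin 4 → Set E) (hX : ∀ i r, {x ∈ X i | ‖x - c i‖ = r}.Finite)
    (hcov : ∀ x : E, ∃ i, x ∈ X i) : False := by
  classical
  obtain ⟨e, heV, he0, heperp⟩ := exists_perp' V hV (c 2 - c 3)
  obtain ⟨d, hdV, hd0, hdperp⟩ := exists_perp' V hV (c 0 - c 1)
  -- a unit normal vector
  have hVo : Module.finrank ℝ V + Module.finrank ℝ Vᗮ = Module.finrank ℝ E :=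
    Submodule.finrank_add_finrank_orthogonal (K := V)
  have hVone : Vᗮ ≠ ⊥ := by
    intro h
    rw [h, finrank_bot] at hVo
    omega
  obtain ⟨n₀, hn₀V, hn₀0⟩ := Submodule.exists_mem_ne_zero_of_ne_bot hVone
  set n : E := ‖n₀‖⁻¹ • n₀ with hn
  have hnV : n ∈ Vᗮ := Submodule.smul_mem _ _ hn₀V
  have hn1 : ‖n‖ = 1 := norm_smul_inv_norm hn₀0
  have horth : ∀ u ∈ V, ⟪u, n⟫ = 0 := fun u hu =>
    (Submodule.mem_orthogonal V n).mp hnV u hu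
  -- the construction
  set α : ℝ := ⟪e, c 2 - c 0⟫ with hα
  set M : ℝ := 1 + 2*|α| + (‖e‖ + ‖d‖)^2 with hM
  set q : ℝ → ℝ → E := fun s t => s • e + t • d with hq
  set w : ℝ → ℝ := fun s => M + 2*s*α with hw
  set τ : ℝ → ℝ → ℝ := fun s t => Real.sqrt (w s - ‖q s t‖^2) with hτ
  set g : ℝ → ℝ → E := fun s t => c 0 + q s t + τ s t • n with hg
  have hqV : ∀ s t, q s t ∈ V := fun s t =>
    Submodule.add_mem _ (Submodule.smul_mem _ _ heV) (Submodule.smul_mem _ _ hdV)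
  have hpos : ∀ s ∈ Icc (0:ℝ) 1, ∀ t ∈ Icc (0:ℝ) 1, 0 ≤ w s - ‖q s t‖^2 := by
    intro s hs t ht
    have h1 : ‖q s t‖ ≤ ‖e‖ + ‖d‖ := by
      have : ‖q s t‖ ≤ ‖s • e‖ + ‖t • d‖ := norm_add_le _ _
      rw [norm_smul, norm_smul, Real.norm_eq_abs, Real.norm_eq_abs] at this
      have hs1 : |s| ≤ 1 := abs_le.mpr ⟨by linarith [hs.1], hs.2⟩
      have ht1 : |t| ≤ 1 := abs_le.mpr ⟨by linarith [ht.1], ht.2⟩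
      nlinarith [norm_nonneg e, norm_nonneg d, abs_nonneg s, abs_nonneg t]
    have h2 : ‖q s t‖^2 ≤ (‖e‖ + ‖d‖)^2 := by
      nlinarith [norm_nonneg (q s t)]
    have h3 : -|α| ≤ s * α := by
      nlinarith [neg_abs_le α, le_abs_self α, hs.1, hs.2, abs_nonneg α]
    simp only [hw, hM]
    nlinarith
  have hinner : ∀ s t (y : E), ⟪q s t, y⟫ = s * ⟪e, y⟫ + t * ⟪d, y⟫ := by
    intro s t y
    simp only [hq, inner_add_left, real_inner_smul_left]
  have hkey : ∀ (i : Fin 4), ∀ s ∈ Icc (0:ℝ) 1, ∀ t ∈ Icc (0:ℝ) 1,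
      ‖g s t - c i‖^2 = w s - 2*⟪q s t, c i - c 0⟫ + ‖c i - c 0‖^2 := by
    intro i s hs t ht
    have hdecomp : g s t - c i = (q s t - (c i - c 0)) + τ s t • n := by
      simp only [hg]; abel
    have hxV : q s t - (c i - c 0) ∈ V := Submodule.sub_mem _ (hqV s t) (hc i)
    have hio : ⟪q s t - (c i - c 0), τ s t • n⟫ = 0 := by
      rw [real_inner_smul_right, horth _ hxV, mul_zero]
    have hn2 : ‖τ s t • n‖^2 = w s - ‖q s t‖^2 := by
      rw [norm_smul, Real.norm_eq_abs, hn1, mul_one, sq_abs]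
      exact Real.sq_sqrt (hpos s hs t ht)
    rw [hdecomp, norm_add_sq_real, hio, hn2, norm_sub_sq_real]
    ring
  -- constancy of the four radii
  have hval : ∀ (i : Fin 4), ∀ s ∈ Icc (0:ℝ) 1, ∀ t ∈ Icc (0:ℝ) 1,
      ‖g s t - c i‖^2 = w s - 2*(s * ⟪e, c i - c 0⟫ + t * ⟪d, c i - c 0⟫) + ‖c i - c 0‖^2 := by
    intro i s hs t ht
    rw [hkey i s hs t ht, hinner]
  have hde : ⟪d, c 1 - c 0⟫ = 0 := by
    have h := hdperp
    rw [show c 0 - c 1 = -(c 1 - c 0) by abel, inner_neg_right] at h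
    linarith
  have hee : ⟪e, c 3 - c 0⟫ = α := by
    have h := heperp
    rw [show c 2 - c 3 = (c 2 - c 0) - (c 3 - c 0) by abel, inner_sub_right] at h
    rw [hα]; linarith
  have nn : ∀ (x y : E), ‖x‖^2 = ‖y‖^2 → ‖x‖ = ‖y‖ := by
    intro x y h
    exact (sq_eq_sq₀ (norm_nonneg _) (norm_nonneg _)).mp h
  have hconstA : ∀ (i : Fin 4), i = 0 ∨ i = 1 →
      ∀ s ∈ Icc (0:ℝ) 1, ∀ t ∈ Icc (0:ℝ) 1, ∀ t' ∈ Icc (0:ℝ) 1,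
      ‖g s t - c i‖ = ‖g s t' - c i‖ := by
    intro i hi s hs t ht t' ht'
    apply nn
    rw [hval i s hs t ht, hval i s hs t' ht']
    rcases hi with rfl | rfl
    · simp
    · rw [hde]; ring
  have hconstB : ∀ (i : Fin 4), i = 2 ∨ i = 3 →
      ∀ t ∈ Icc (0:ℝ) 1, ∀ s ∈ Icc (0:ℝ) 1, ∀ s' ∈ Icc (0:ℝ) 1,
      ‖g s t - c i‖ = ‖g s' t - c i‖ := by
    intro i hi t ht s hs s' hs'
    apply nn
    rw [hval i s hs t ht, hval i s' hs' t ht]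
    rcases hi with rfl | rfl
    · rw [← hα]; simp only [hw]; ring
    · rw [hee]; simp only [hw]; ring
  -- injectivity
  have hinj_t : ∀ s, Function.Injective (fun t => g s t) := by
    intro s t t' hgt
    have hexp : ∀ t0 : ℝ, ⟪d, g s t0⟫ = ⟪d, c 0⟫ + s*⟪d, e⟫ + t0*‖d‖^2 := by
      intro t0
      simp only [hg, hq, inner_add_right, real_inner_smul_right, horth d hdV,
        real_inner_self_eq_norm_sq]
      ring
    have h1 : ⟪d, g s t⟫ = ⟪d, g s t'⟫ := by simp only [hgt]
    rw [hexp t, hexp t'] at h1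
    have hd2 : (0:ℝ) < ‖d‖^2 := pow_pos (norm_pos_iff.mpr hd0) 2
    have h2 : t*‖d‖^2 = t'*‖d‖^2 := by linarith
    exact mul_right_cancel₀ (ne_of_gt hd2) h2
  have hinj_s : ∀ t, Function.Injective (fun s => g s t) := by
    intro t s s' hgs
    have hexp : ∀ s0 : ℝ, ⟪e, g s0 t⟫ = ⟪e, c 0⟫ + s0*‖e‖^2 + t*⟪e, d⟫ := by
      intro s0
      simp only [hg, hq, inner_add_right, real_inner_smul_right, horth e heV,
        real_inner_self_eq_norm_sq]
      ring
    have h1 : ⟪e, g s t⟫ = ⟪e, g s' t⟫ := by simp only [hgs]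
    rw [hexp s, hexp s'] at h1
    have he2 : (0:ℝ) < ‖e‖^2 := pow_pos (norm_pos_iff.mpr he0) 2
    have h2 : s*‖e‖^2 = s'*‖e‖^2 := by linarith
    exact mul_right_cancel₀ (ne_of_gt he2) h2
  -- finiteness of slices
  have hIccHalf : (1/2:ℝ) ∈ Icc (0:ℝ) 1 := by norm_num
  have hA : ∀ s ∈ Ioo (0:ℝ) 1, {t ∈ Ioo (0:ℝ) 1 | g s t ∈ X 0 ∪ X 1}.Finite := by
    intro s hs
    have hsI := Ioo_subset_Icc_self hs
    have hfin : ({x ∈ X 0 | ‖x - c 0‖ = ‖g s (1/2) - c 0‖} ∪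
        {x ∈ X 1 | ‖x - c 1‖ = ‖g s (1/2) - c 1‖}).Finite := (hX 0 _).union (hX 1 _)
    have hpre := Set.Finite.preimage (Function.Injective.injOn (hinj_t s)) hfin
    apply hpre.subset
    rintro t ⟨ht, hx⟩
    have htI := Ioo_subset_Icc_self ht
    rcases hx with hx | hx
    · exact Or.inl ⟨hx, hconstA 0 (Or.inl rfl) s hsI t htI (1/2) hIccHalf⟩
    · exact Or.inr ⟨hx, hconstA 1 (Or.inr rfl) s hsI t htI (1/2) hIccHalf⟩
  have hB : ∀ t ∈ Ioo (0:ℝ) 1, {s ∈ Ioo (0:ℝ) 1 | g s t ∈ X 2 ∪ X 3}.Finite := by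
    intro t ht
    have htI := Ioo_subset_Icc_self ht
    have hfin : ({x ∈ X 2 | ‖x - c 2‖ = ‖g (1/2) t - c 2‖} ∪
        {x ∈ X 3 | ‖x - c 3‖ = ‖g (1/2) t - c 3‖}).Finite := (hX 2 _).union (hX 3 _)
    have hpre := Set.Finite.preimage (Function.Injective.injOn (hinj_s t)) hfin
    apply hpre.subset
    rintro s ⟨hs, hx⟩
    have hsI := Ioo_subset_Icc_self hs
    rcases hx with hx | hx
    · exact Or.inl ⟨hx, hconstB 2 (Or.inl rfl) t htI s hsI (1/2) hIccHalf⟩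
    · exact Or.inr ⟨hx, hconstB 3 (Or.inr rfl) t htI s hsI (1/2) hIccHalf⟩
  apply grid g (X 0 ∪ X 1) (X 2 ∪ X 3) hA hB
  intro s _ t _
  obtain ⟨i, hi⟩ := hcov (g s t)
  fin_cases i
  · exact Or.inl (Or.inl hi)
  · exact Or.inl (Or.inr hi)
  · exact Or.inr (Or.inl hi)
  · exact Or.inr (Or.inr hi)


/-- A spray with center `c`: every sphere centered at `c` meets `X` in a finite set. -/
def IsSpray {d : ℕ} (c : EuclideanSpace ℝ (Fin d)) (X : Set (EuclideanSpace ℝ (Fin d))) : Prop :=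
  ∀ r : ℝ, {x ∈ X | ‖x - c‖ = r}.Finite

theorem stmt1 (c : Fin 4 → EuclideanSpace ℝ (Fin 3))
    (P : AffineSubspace ℝ (EuclideanSpace ℝ (Fin 3)))
    (hP : Module.finrank ℝ P.direction = 2) (hcP : ∀ i, c i ∈ P)
    (X : Fin 4 → Set (EuclideanSpace ℝ (Fin 3)))
    (hX : ∀ i, IsSpray (c i) (X i)) :
    (⋃ i, X i) ≠ Set.univ := by
  intro h
  have hdim : Module.finrank ℝ (EuclideanSpace ℝ (Fin 3)) = 3 := by
    simp [finrank_euclideanSpace]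
  have hc : ∀ i, c i - c 0 ∈ P.direction := by
    intro i
    have := AffineSubspace.vsub_mem_direction (hcP i) (hcP 0)
    rwa [vsub_eq_sub] at this
  have hcov : ∀ x : EuclideanSpace ℝ (Fin 3), ∃ i, x ∈ X i := by
    intro x
    have : x ∈ ⋃ i, X i := h ▸ Set.mem_univ x
    exact Set.mem_iUnion.mp this
  exact aux hdim c P.direction hP hc X (fun i r => hX i r) hcov
end

section
/- For every d ≥ 2, the space ℝ^d is not the union of d sprays: for any points c₁, …, c_d ∈ ℝ^d and any sets X₁, …, X_d ⊆ ℝ^d such that each X_i is a spray with center c_i, the union X₁ ∪ ⋯ ∪ X_d is not all of ℝ^d. -/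
open Set Submodule Module Metric Filter Topology
open scoped RealInnerProductSpace

theorem Metric.sphere_infinite_of_one_lt_rank {F : Type*} [NormedAddCommGroup F]
    [NormedSpace ℝ F] (h : 1 < Module.rank ℝ F) (x : F) {r : ℝ} (hr : 0 < r) :
    (sphere x r).Infinite := by
  have : Nontrivial F := rank_pos_iff_nontrivial.1 (zero_lt_one.trans h)
  obtain ⟨v, hv⟩ := (NormedSpace.sphere_nonempty (x := (0 : F))).2 hr.le
  have hv0 : v ≠ 0 := ne_zero_of_mem_sphere hr.ne' ⟨v, hv⟩
  refine (isPreconnected_sphere h x r).infinite_of_nontrivial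
    ⟨x + v, by simpa using hv, x - v, by simpa using hv, fun h => hv0 ?_⟩
  have : (2 : ℝ) • v = (x + v) - (x - v) := by rw [two_smul]; abel
  rwa [h, sub_self, smul_eq_zero, or_iff_right two_ne_zero] at this

/-- The coordinate `i₀` runs through countably many values, and the coordinate `i₁` is fixed
outside the countably many values that it takes on the corresponding fibres in `Y`. -/
theorem exists_infinite_disjoint_of_range_mem_nhds {α ι : Type*} [Fintype ι]
    {Φ : α → ι → ℝ} {q : ι → ℝ} (hq : range Φ ∈ 𝓝 q) {i₀ i₁ : ι} (hi : i₁ ≠ i₀) {Y : Set α}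
    (hY : ∀ r, {y ∈ Y | Φ y i₀ = r}.Countable) :
    ∃ S : Set α, S.Infinite ∧ Disjoint S Y ∧ ∀ i ≠ i₀, ∀ x ∈ S, ∀ y ∈ S, Φ x i = Φ y i := by
  classical
  obtain ⟨ε, hε, hball⟩ := Metric.mem_nhds_iff.1 hq
  have hinf : (ball (q i₀) ε).Infinite := by
    rw [Real.ball_eq_Ioo]; exact Ioo_infinite (by linarith)
  set s := hinf.natEmbedding
  have hC : (⋃ k, {y ∈ Y | Φ y i₀ = s k}).Countable := countable_iUnion fun k => hY _
  obtain ⟨ρ, hρC, hρ⟩ := ((hC.image fun y => Φ y i₁).dense_compl ℝ).exists_mem_open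
    (isOpen_ball (x := q i₁)) (nonempty_ball.2 hε)
  set t : ℕ → ι → ℝ := fun k => Function.update (Function.update q i₁ ρ) i₀ (s k)
  have ht : ∀ k, t k ∈ ball q ε := by
    intro k
    rw [ball_pi _ hε, mem_univ_pi]
    intro i
    rcases eq_or_ne i i₀ with rfl | h0
    · simp [t]
    rcases eq_or_ne i i₁ with rfl | h1
    · simp [t, h0, hρ]
    · simp [t, h0, h1, hε]
  choose x hx using fun k => hball (ht k)
  refine ⟨range x, infinite_range_of_injective fun k l hkl => ?_, ?_, ?_⟩
  · have := congrFun (congrArg Φ hkl) i₀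
    simp only [hx, t, Function.update_self] at this
    exact s.injective (Subtype.ext this)
  · rw [disjoint_left]
    rintro _ ⟨k, rfl⟩ hk
    exact hρC ⟨x k, mem_iUnion.2 ⟨k, hk, by simp [hx, t]⟩, by simp [hx, t, hi]⟩
  · rintro i hi0 _ ⟨k, rfl⟩ _ ⟨l, rfl⟩
    simp [hx, t, hi0]

section Geometry

variable {E : Type*} [NormedAddCommGroup E] [InnerProductSpace ℝ E] {ι : Type*} (p : ι → E)

theorem norm_add_sub_sq_of_mem_orthogonal_vectorSpan {v : E}
    (hv : v ∈ (vectorSpan ℝ (range p))ᗮ) (i j : ι) :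
    ‖p i + v - p j‖ ^ 2 = ‖v‖ ^ 2 + ‖p i - p j‖ ^ 2 := by
  have hperp : ⟪v, p i - p j⟫ = 0 :=
    inner_left_of_mem_orthogonal (vsub_mem_vectorSpan ℝ (mem_range_self i) (mem_range_self j)) hv
  rw [add_sub_right_comm, add_comm, norm_add_sq_real, hperp]
  ring

theorem exists_infinite_forall_norm_sub_eq (i₀ : ι)
    (h : 2 ≤ finrank ℝ (vectorSpan ℝ (range p))ᗮ) :
    ∃ S : Set E, S.Infinite ∧ ∀ i, ∀ x ∈ S, ∀ y ∈ S, ‖x - p i‖ = ‖y - p i‖ := by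
  set K := (vectorSpan ℝ (range p))ᗮ
  have hK : 1 < Module.rank ℝ K := by
    have : FiniteDimensional ℝ K := Module.finite_of_finrank_pos (by omega)
    rw [← Module.finrank_eq_rank]
    exact_mod_cast h
  refine ⟨(fun v : K => p i₀ + v) '' sphere 0 1,
    (sphere_infinite_of_one_lt_rank hK 0 one_pos).image
      ((add_right_injective (p i₀)).comp Subtype.val_injective).injOn, ?_⟩
  rintro i _ ⟨v, hv, rfl⟩ _ ⟨w, hw, rfl⟩
  rw [← sq_eq_sq₀ (norm_nonneg _) (norm_nonneg _),
    norm_add_sub_sq_of_mem_orthogonal_vectorSpan p v.2,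
    norm_add_sub_sq_of_mem_orthogonal_vectorSpan p w.2, Submodule.norm_coe, Submodule.norm_coe,
    mem_sphere_zero_iff_norm.1 hv, mem_sphere_zero_iff_norm.1 hw]

theorem span_range_add_sub_eq_top [FiniteDimensional ℝ E] {ν : E}
    (hν : (vectorSpan ℝ (range p))ᗮ = ℝ ∙ ν) (i₀ : ι) :
    span ℝ (range fun i => p i₀ + ν - p i) = ⊤ := by
  set T := span ℝ (range fun i => p i₀ + ν - p i)
  have hmem : ∀ i, p i₀ + ν - p i ∈ T := fun i => subset_span (mem_range_self i)
  have hW : vectorSpan ℝ (range p) ≤ T := by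
    rw [vectorSpan_range_eq_span_range_vsub_right ℝ p i₀, span_le]
    rintro _ ⟨i, rfl⟩
    show p i -ᵥ p i₀ ∈ T
    convert sub_mem (hmem i₀) (hmem i) using 1
    rw [vsub_eq_sub]
    abel
  have hν_mem : ν ∈ T := by simpa using hmem i₀
  rw [eq_top_iff, ← sup_orthogonal_of_hasOrthogonalProjection (K := vectorSpan ℝ (range p)), hν]
  exact sup_le hW ((span_singleton_le_iff_mem _ _).2 hν_mem)

theorem range_norm_sub_sq_mem_nhds [FiniteDimensional ℝ E] [Fintype ι] {x₀ : E}
    (hcard : Fintype.card ι = finrank ℝ E) (hspan : span ℝ (range fun i => x₀ - p i) = ⊤) :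
    range (fun x i => ‖x - p i‖ ^ 2) ∈ 𝓝 (fun i => ‖x₀ - p i‖ ^ 2) := by
  set L : E →L[ℝ] ι → ℝ := ContinuousLinearMap.pi fun i => 2 • innerSL ℝ (x₀ - p i)
  have hL : HasStrictFDerivAt (fun x i => ‖x - p i‖ ^ 2) L x₀ :=
    hasStrictFDerivAt_pi.2 fun i => by
      simpa using (hasStrictFDerivAt_norm_sq (x₀ - p i)).comp x₀ (hasStrictFDerivAt_sub_const (p i))
  have hinj : Function.Injective L := by
    rw [← L.coe_coe, ← LinearMap.ker_eq_bot, eq_bot_iff]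
    intro v hv
    have hperp : innerₛₗ ℝ v = 0 := LinearMap.ext_on_range hspan fun i => by
      have : 2 • ⟪x₀ - p i, v⟫ = 0 := congrFun (LinearMap.mem_ker.1 hv) i
      simpa [real_inner_comm] using this
    simpa using congrArg (· v) hperp
  have hsurj : Function.Surjective L := (LinearMap.injective_iff_surjective_of_finrank_eq_finrank
    (f := L.toLinearMap) (by simp [hcard])).1 hinj
  rw [← hL.map_nhds_eq_of_surj (LinearMap.range_eq_top.2 hsurj)]
  exact range_mem_map

end Geometry

theorem IsSpray.finite_setOf_norm_sub_sq_eq {d : ℕ} {c : EuclideanSpace ℝ (Fin d)}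
    {X : Set (EuclideanSpace ℝ (Fin d))} (hX : IsSpray c X) (r : ℝ) :
    {x ∈ X | ‖x - c‖ ^ 2 = r}.Finite :=
  (hX √r).subset fun _ ⟨hx, hr⟩ => ⟨hx, by rw [← hr, Real.sqrt_sq (norm_nonneg _)]⟩

theorem finite_of_subset_iUnion_of_isSpray {d : ℕ} {ι : Type*} [Finite ι]
    {c : ι → EuclideanSpace ℝ (Fin d)} {X : ι → Set (EuclideanSpace ℝ (Fin d))}
    (hX : ∀ i, IsSpray (c i) (X i)) {S : Set (EuclideanSpace ℝ (Fin d))} (hS : S ⊆ ⋃ i, X i)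
    (hdist : ∀ i, ∀ x ∈ S ∩ X i, ∀ y ∈ S ∩ X i, ‖x - c i‖ = ‖y - c i‖) : S.Finite := by
  have hpiece : ∀ i, (S ∩ X i).Finite := by
    intro i
    rcases (S ∩ X i).eq_empty_or_nonempty with h | ⟨y, hy⟩
    · simp [h]
    · exact (hX i ‖y - c i‖).subset fun x hx => ⟨hx.2, hdist i x hx y hy⟩
  exact (finite_iUnion hpiece).subset (by rw [← inter_iUnion]; exact subset_inter subset_rfl hS)

theorem stmt2 (d : ℕ) (hd : 2 ≤ d)
    (c : Fin d → EuclideanSpace ℝ (Fin d))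
    (X : Fin d → Set (EuclideanSpace ℝ (Fin d)))
    (hX : ∀ i, IsSpray (c i) (X i)) :
    (⋃ i, X i) ≠ Set.univ := by
  intro hU
  have hcover : ∀ S, S ⊆ ⋃ i, X i := fun S => hU ▸ subset_univ S
  set W := vectorSpan ℝ (range c)
  have hWperp : 1 ≤ finrank ℝ Wᗮ := by
    have : finrank ℝ W ≤ d - 1 := finrank_vectorSpan_range_le ℝ c (by simp; omega)
    have := W.finrank_add_finrank_orthogonal
    simp only [finrank_euclideanSpace_fin] at this
    omega
  let i₀ : Fin d := ⟨0, by omega⟩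
  rcases hWperp.lt_or_eq with hA | hB
  · obtain ⟨S, hS, hdist⟩ := exists_infinite_forall_norm_sub_eq c i₀ hA
    exact hS (finite_of_subset_iUnion_of_isSpray hX (hcover S)
      fun i x hx y hy => hdist i x hx.1 y hy.1)
  · obtain ⟨ν, hν, hν0⟩ := exists_mem_ne_zero_of_ne_bot fun h => by
      have := (finrank_eq_zero (R := ℝ) (S := Wᗮ)).2 h; omega
    have hspan := span_range_add_sub_eq_top c
      (eq_span_singleton_of_mem_of_finrank_eq_one hB.symm hν hν0) i₀
    let i₁ : Fin d := ⟨1, by omega⟩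
    have hi₁ : i₁ ≠ i₀ := by simp [i₀, i₁, Fin.ext_iff]
    obtain ⟨S, hS, hSX, hdist⟩ := exists_infinite_disjoint_of_range_mem_nhds
      (range_norm_sub_sq_mem_nhds c (by simp) hspan) hi₁ (Y := X i₀) fun r =>
        ((hX i₀).finite_setOf_norm_sub_sq_eq r).countable
    refine hS (finite_of_subset_iUnion_of_isSpray hX (hcover S) fun i x hx y hy => ?_)
    rcases eq_or_ne i i₀ with rfl | hi
    · exact absurd hx.2 (disjoint_left.1 hSX hx.1)
    · exact (sq_eq_sq₀ (norm_nonneg _) (norm_nonneg _)).1 (hdist i hi x hx.1 y hy.1)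
end

section
/- For every d ≥ 2, the space ℝ^d is not the union of (d−1) σ-sprays: for any points c₁, …, c_{d−1} ∈ ℝ^d and any sets X₁, …, X_{d−1} ⊆ ℝ^d such that each X_i is a σ-spray with center c_i, the union X₁ ∪ ⋯ ∪ X_{d−1} is not all of ℝ^d. -/
/-- A σ-spray with center `c`: every sphere centered at `c` meets `X` in a countable set. -/
def IsSigmaSpray {d : ℕ} (c : EuclideanSpace ℝ (Fin d))
    (X : Set (EuclideanSpace ℝ (Fin d))) : Prop :=
  ∀ r : ℝ, {x ∈ X | ‖x - c‖ = r}.Countable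

/-!
The centers `c₁, …, c_{d-1}` span an affine subspace of dimension at most `d - 2`, whose
orthogonal complement `Kᗮ` therefore has dimension at least `2`. Translating the unit sphere of
`Kᗮ` to `c₁` gives, by Pythagoras, a set on which the distance to every `cᵢ` is constant, so it
meets each `Xᵢ` in a countable set. But a sphere in a real space of dimension at least `2` is
connected with more than one point, hence uncountable.
-/

open Metric Module

theorem Metric.not_countable_sphere_of_one_lt_rank {E : Type*} [NormedAddCommGroup E]
    [NormedSpace ℝ E] (h : 1 < Module.rank ℝ E) (x : E) {r : ℝ} (hr : 0 < r) :
    ¬ (sphere x r).Countable := by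
  intro hcount
  have : Nontrivial E := rank_pos_iff_nontrivial.1 (zero_lt_one.trans h)
  obtain ⟨v, hv⟩ := NormedSpace.sphere_nonempty (x := (0 : E)).2 hr.le
  have hne : x + v ≠ x - v := by
    intro heq
    rw [sub_eq_add_neg, add_right_inj] at heq
    exact ne_neg_of_mem_sphere ℝ hr.ne' ⟨v, hv⟩ (Subtype.ext heq)
  refine hne (hcount.isTotallyDisconnected _ subset_rfl (isPreconnected_sphere h x r) ?_ ?_)
  · simpa using hv
  · simpa using hv

section InnerProductSpace

variable {E : Type*} [NormedAddCommGroup E] [InnerProductSpace ℝ E]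

theorem norm_add_sub_sq_of_mem_orthogonal {K : Submodule ℝ E} {v p q : E} (hv : v ∈ Kᗮ)
    (hpq : p - q ∈ K) : ‖v + (p - q)‖ ^ 2 = ‖v‖ ^ 2 + ‖p - q‖ ^ 2 := by
  rw [norm_add_sq_real, K.inner_left_of_mem_orthogonal hpq hv, mul_zero, add_zero]

theorem exists_not_countable_forall_norm_sub_eq {ι : Type*} (c : ι → E)
    (hc : 1 < Module.rank ℝ (vectorSpan ℝ (Set.range c))ᗮ) :
    ∃ S : Set E, ¬ S.Countable ∧ ∀ i, ∃ r, ∀ x ∈ S, ‖x - c i‖ = r := by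
  set K := vectorSpan ℝ (Set.range c)
  obtain ⟨p, hp⟩ : ∃ p : E, ∀ i, p - c i ∈ K := by
    rcases isEmpty_or_nonempty ι with _ | ⟨⟨i₀⟩⟩
    · exact ⟨0, isEmptyElim⟩
    · exact ⟨c i₀, fun i => vsub_mem_vectorSpan ℝ (Set.mem_range_self i₀) (Set.mem_range_self i)⟩
  set f : Kᗮ → E := fun v => p + v
  have hf : Function.Injective f := fun v w h => Subtype.ext (add_left_cancel h)
  refine ⟨f '' sphere 0 1, fun hcount => ?_, fun i => ⟨√(1 + ‖p - c i‖ ^ 2), ?_⟩⟩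
  · exact not_countable_sphere_of_one_lt_rank hc 0 one_pos
      ((Set.mapsTo_image f _).countable_of_injOn hf.injOn hcount)
  · rintro _ ⟨v, hv, rfl⟩
    have hv1 : ‖(v : E)‖ = 1 := mem_sphere_zero_iff_norm.1 hv
    have hsq := norm_add_sub_sq_of_mem_orthogonal v.2 (hp i)
    rw [hv1, one_pow, ← add_sub_assoc, add_comm (v : E)] at hsq
    rw [← hsq, Real.sqrt_sq (norm_nonneg _)]

theorem one_lt_rank_orthogonal_vectorSpan [FiniteDimensional ℝ E] {ι : Type*} [Fintype ι]
    [Nonempty ι] (c : ι → E) (h : Fintype.card ι < finrank ℝ E) :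
    1 < Module.rank ℝ (vectorSpan ℝ (Set.range c))ᗮ := by
  obtain ⟨n, hn⟩ := Nat.exists_eq_succ_of_ne_zero (Fintype.card_ne_zero (α := ι))
  have hK := finrank_vectorSpan_range_le ℝ c hn
  have hsum := (vectorSpan ℝ (Set.range c)).finrank_add_finrank_orthogonal
  have hKperp : 1 < finrank ℝ (vectorSpan ℝ (Set.range c))ᗮ := by omega
  exact_mod_cast Module.lt_rank_of_lt_finrank hKperp

end InnerProductSpace

theorem countable_of_subset_iUnion_of_isSigmaSpray {d : ℕ} {ι : Type*} [Countable ι]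
    {c : ι → EuclideanSpace ℝ (Fin d)} {X : ι → Set (EuclideanSpace ℝ (Fin d))}
    (hX : ∀ i, IsSigmaSpray (c i) (X i)) {S : Set (EuclideanSpace ℝ (Fin d))}
    (hS : ∀ i, ∃ r, ∀ x ∈ S, ‖x - c i‖ = r) (hSX : S ⊆ ⋃ i, X i) : S.Countable := by
  choose r hr using hS
  refine (Set.countable_iUnion fun i => hX i (r i)).mono fun x hx => ?_
  obtain ⟨i, hi⟩ := Set.mem_iUnion.1 (hSX hx)
  exact Set.mem_iUnion.2 ⟨i, hi, hr i x hx⟩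

theorem stmt3 (d : ℕ) (hd : 2 ≤ d)
    (c : Fin (d - 1) → EuclideanSpace ℝ (Fin d))
    (X : Fin (d - 1) → Set (EuclideanSpace ℝ (Fin d)))
    (hX : ∀ i, IsSigmaSpray (c i) (X i)) :
    (⋃ i, X i) ≠ Set.univ := by
  have : Nonempty (Fin (d - 1)) := ⟨⟨0, by omega⟩⟩
  have hrank := one_lt_rank_orthogonal_vectorSpan c 
    (by rw [Fintype.card_fin, finrank_euclideanSpace_fin]; omega)
  obtain ⟨S, hS, hdist⟩ := exists_not_countable_forall_norm_sub_eq c hrank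
  intro hU
  exact hS (countable_of_subset_iUnion_of_isSigmaSpray hX hdist (hU ▸ Set.subset_univ S))
end

section
/- For every d ≥ 2 the following are equivalent: (a) CH, i.e., 2^ℵ₀ ≤ ℵ₁; (b) for all well-placed points c₁, …, c_d ∈ ℝ^d there are sets X₁, …, X_d covering ℝ^d such that each X_i is a σ-spray with center c_i; (c) there exist well-placed points c₁, …, c_d ∈ ℝ^d and sets X₁, …, X_d covering ℝ^d such that each X_i is a σ-spray with center c_i. -/
open Cardinal

/-- Points are well-placed: they lie on a common affine hyperplane and every subset of
size at most `d` is affinely independent. -/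
def WellPlaced {d N : ℕ} (c : Fin N → EuclideanSpace ℝ (Fin d)) : Prop :=
  (∃ H : AffineSubspace ℝ (EuclideanSpace ℝ (Fin d)),
      Module.finrank ℝ H.direction = d - 1 ∧ ∀ i, c i ∈ H) ∧
  ∀ s : Finset (Fin N), s.card ≤ d → AffineIndependent ℝ (fun i : s => c i)

/-!
Under CH, fix an injection `g` of `ℝ` into `ω₁` and put each point into the piece of the centre
whose distance to it is `g`-largest. A sphere about `c i` inside the piece `X i` then consists of
points all of whose distances to the centres lie in a countable initial segment of `g`; since the
spheres about `d` affinely independent centres in `ℝ^d` meet in at most two points, it is countable.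

Conversely, for `r, t` in a suitable interval `I` there is a point at distance `r` from `c 0`
and `t` from all other centres. If `2^ℵ₀ > ℵ₁`, pick `T ⊆ I` of size `ℵ₁`; the points of the
pieces `X i` at distance in `T` from `c i` form a set `C` of size at most `ℵ₁`. For each `r ∈ I`,
the uncountably many points at distance `r` from `c 0` and distances in `T` from the other
centres cannot all lie in the countable sphere of `X 0`, so one of them is in `C`. This injects
`I` into `C`, yet `#I = 2^ℵ₀`.
-/

open Set Module Submodule
open scoped RealInnerProductSpace

universe u

theorem exists_cover_countable_fibers {α β ι : Type*} [Finite ι] [Nonempty ι] (hβ : #β ≤ ℵ₁)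
    (f : ι → α → β) (hf : ∀ t : ι → β, {x | ∀ i, f i x = t i}.Countable) :
    ∃ X : ι → Set α, ⋃ i, X i = Set.univ ∧ ∀ i b, {x ∈ X i | f i x = b}.Countable := by
  obtain ⟨g⟩ : Nonempty (β ↪ (ℵ₁ : Cardinal).ord.ToType) := by
    rwa [← le_def, mk_ord_toType]
  have hIic : ∀ b, (g ⁻¹' Iic (g b)).Countable := fun b => by
    refine Countable.preimage ?_ g.injective
    have h := mk_Iio_lt (g b) (by rw [mk_ord_toType, Ordinal.type_toType])
    rw [mk_ord_toType, lt_aleph_one_iff, le_aleph0_iff_set_countable] at h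
    rw [← Iio_union_right]
    exact h.union (countable_singleton _)
  refine ⟨fun i => {x | ∀ k, g (f k x) ≤ g (f i x)}, ?_, fun i b => ?_⟩
  · exact iUnion_eq_univ_iff.2 fun x => Finite.exists_max fun k => g (f k x)
  · refine ((countable_univ_pi fun _ => hIic b).biUnion fun t _ => hf t).mono ?_
    rintro x ⟨hxi, rfl⟩
    exact mem_biUnion (x := fun k => f k x) (fun k _ => hxi k) fun k => rfl

theorem mk_iUnion_le_aleph_one {α γ : Type u} (A : γ → Set α) (hγ : #γ ≤ ℵ₁)
    (hA : ∀ t, (A t).Countable) : #(⋃ t, A t) ≤ ℵ₁ :=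
  calc #(⋃ t, A t) ≤ #γ * ⨆ t, #(A t) := mk_iUnion_le A
    _ ≤ ℵ₁ * ℵ₀ := mul_le_mul' hγ (ciSup_le' fun t => le_aleph0_iff_set_countable.2 (hA t))
    _ = ℵ₁ := mul_aleph0_eq aleph0_lt_aleph_one.le

theorem mk_le_aleph_one_of_cover {α β ι : Type u} [Countable ι] (f : ι → α → β)
    (X : ι → Set α) (hX : ⋃ i, X i = Set.univ) (hfib : ∀ i b, {x ∈ X i | f i x = b}.Countable)
    {i₀ i₁ : ι} (hi : i₁ ≠ i₀) {I : Set β}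
    (hI : ∀ a ∈ I, ∀ b ∈ I, ∃ x, f i₀ x = a ∧ ∀ i ≠ i₀, f i x = b) :
    #I ≤ ℵ₁ := by
  by_contra! hlt
  obtain ⟨T, hTI, hT⟩ := le_mk_iff_exists_subset.1 hlt.le
  set C := ⋃ p : ι × T, {x ∈ X p.1 | f p.1 x = p.2}
  have hC : #C ≤ ℵ₁ := by
    refine mk_iUnion_le_aleph_one _ ?_ fun p => hfib p.1 p.2
    rw [mk_prod, lift_id, lift_id, hT]
    calc #ι * ℵ₁ ≤ ℵ₀ * ℵ₁ := mul_le_mul_left mk_le_aleph0 _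
      _ = ℵ₁ := aleph0_mul_eq aleph0_lt_aleph_one.le
  have hIC : I ⊆ f i₀ '' C := by
    intro a ha
    set W := {x | f i₀ x = a ∧ ∀ i ≠ i₀, f i x ∈ T}
    have hTW : T ⊆ f i₁ '' W := fun t ht => by
      obtain ⟨x, hx₀, hx⟩ := hI a ha t (hTI ht)
      exact ⟨x, ⟨hx₀, fun i hi => (hx i hi).symm ▸ ht⟩, hx i₁ hi⟩
    have hW : ¬ W ⊆ {x ∈ X i₀ | f i₀ x = a} := fun hsub => by
      have := ((hfib i₀ a).mono hsub).image (f i₁) |>.mono hTW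
      rw [← le_aleph0_iff_set_countable, hT] at this
      exact aleph0_lt_aleph_one.not_ge this
    obtain ⟨x, ⟨hxa, hxT⟩, hx⟩ := not_subset.1 hW
    obtain ⟨i, hxi⟩ := mem_iUnion.1 (hX ▸ mem_univ x)
    have hi₀ : i ≠ i₀ := by
      rintro rfl
      exact hx ⟨hxi, hxa⟩
    exact ⟨x, mem_iUnion.2 ⟨(i, ⟨f i x, hxT i hi₀⟩), hxi, rfl⟩, hxa⟩
  exact hlt.not_ge ((mk_le_mk_of_subset hIC).trans (mk_image_le.trans hC))

section EuclideanSpheres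

variable {E : Type*} [NormedAddCommGroup E] [InnerProductSpace ℝ E]

theorem sub_mem_orthogonal_vectorSpan {s : Set E} {p q : E}
    (h : ∀ c ∈ s, ‖p - c‖ = ‖q - c‖) : q - p ∈ (vectorSpan ℝ s)ᗮ := by
  rw [← span_singleton_le_iff_mem, ← isOrtho_iff_le, vectorSpan_def, isOrtho_span]
  rintro _ rfl _ ⟨a, ha, b, hb, rfl⟩
  rw [real_inner_comm]
  exact EuclideanGeometry.inner_vsub_vsub_of_dist_eq_of_dist_eq
    (by simpa [dist_eq_norm] using h b hb) (by simpa [dist_eq_norm] using h a ha)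

variable [FiniteDimensional ℝ E]

theorem LinearIndependent.exists_mem_span_inner_eq {κ : Type*} {w : κ → E}
    (hw : LinearIndependent ℝ w) (f : κ → ℝ) :
    ∃ p ∈ span ℝ (range w), ∀ i, ⟪w i, p⟫ = f i := by
  let b := Basis.span hw
  let φ : StrongDual ℝ (span ℝ (range w)) := LinearMap.toContinuousLinearMap (b.constr ℝ f)
  refine ⟨(InnerProductSpace.toDual ℝ (span ℝ (range w))).symm φ, coe_mem _, fun i => ?_⟩
  rw [show w i = b i from congrArg Subtype.val (Basis.span_apply hw i).symm, real_inner_comm,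
    ← Submodule.coe_inner, InnerProductSpace.toDual_symm_apply]
  exact b.constr_basis ℝ f i

theorem AffineIndependent.finite_setOf_forall_norm_sub_eq {ι : Type*} [Fintype ι] [Nonempty ι]
    {c : ι → E} (hc : AffineIndependent ℝ c) (hcard : Fintype.card ι = finrank ℝ E)
    (r : ι → ℝ) : {x | ∀ i, ‖x - c i‖ = r i}.Finite := by
  set F := {x | ∀ i, ‖x - c i‖ = r i}
  rcases F.eq_empty_or_nonempty with hF | ⟨p, hp⟩
  · simp [hF]
  obtain ⟨i₀⟩ := ‹Nonempty ι›
  set V := vectorSpan ℝ (range c)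
  have hV : finrank ℝ Vᗮ = 1 := by
    have hsum := V.finrank_add_finrank_orthogonal
    rw [hc.finrank_vectorSpan (Nat.sub_add_cancel Fintype.card_pos).symm, ← hcard] at hsum
    have := Fintype.card_pos (α := ι)
    omega
  have : Nontrivial Vᗮ := finrank_pos_iff (R := ℝ).1 (by omega)
  obtain ⟨v, hv⟩ := exists_ne (0 : Vᗮ)
  have hVv : Vᗮ = ℝ ∙ (v : E) :=
    eq_span_singleton_of_mem_of_finrank_eq_one hV v.2 (by simpa using hv)
  -- `F` lies on the sphere about `c i₀` and on the line through `p` normal to `V`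
  let S : EuclideanGeometry.Sphere E := ⟨c i₀, r i₀⟩
  refine (toFinite {p, S.secondInter p v}).subset fun q hq => ?_
  have hpS : p ∈ S := by simpa [S, EuclideanGeometry.mem_sphere, dist_eq_norm] using hp i₀
  have hqS : q ∈ S := by simpa [S, EuclideanGeometry.mem_sphere, dist_eq_norm] using hq i₀
  have hq' : q ∈ AffineSubspace.mk' p (ℝ ∙ (v : E)) := by
    rw [AffineSubspace.mem_mk', vsub_eq_sub, ← hVv]
    exact sub_mem_orthogonal_vectorSpan (by rintro _ ⟨i, rfl⟩; rw [hp i, hq i])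
  exact (S.eq_or_eq_secondInter_of_mem_mk'_span_singleton_iff_mem hpS hq').2 hqS

theorem AffineIndependent.exists_norm_sub_sq_eq {ι : Type*} [Fintype ι] {c : ι → E}
    (hc : AffineIndependent ℝ c) (hcard : Fintype.card ι ≤ finrank ℝ E) (i₀ : ι) :
    ∃ K, ∀ a b : ℝ, K ≤ a → |a - b| ≤ 1 →
      ∃ x, ‖x - c i₀‖ ^ 2 = a ∧ ∀ i ≠ i₀, ‖x - c i‖ ^ 2 = b := by
  set w : {i // i ≠ i₀} → E := fun i => c i - c i₀
  have hw : LinearIndependent ℝ w := by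
    simpa [vsub_eq_sub] using (affineIndependent_iff_linearIndependent_vsub ℝ c i₀).1 hc
  set W := span ℝ (range w)
  have hW : W ≠ ⊤ := fun h => by
    classical
    have hWd : finrank ℝ W = _ := finrank_span_eq_card hw
    rw [h, finrank_top, Fintype.card_subtype_compl, Fintype.card_subtype_eq] at hWd
    have := Fintype.card_pos_iff.2 ⟨i₀⟩
    omega
  have : Nontrivial Wᗮ := nontrivial_iff_ne_bot.2 (orthogonal_eq_bot_iff.not.2 hW)
  -- the point is `c i₀ + p + m`: `p ∈ W` prescribes the differences of the squared distances,
  -- which are affine in `p`, and `m ∈ Wᗮ` then adjusts the distance to `c i₀`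
  obtain ⟨p₀, hp₀W, hp₀⟩ := hw.exists_mem_span_inner_eq fun i => ‖w i‖ ^ 2 / 2
  obtain ⟨p₁, hp₁W, hp₁⟩ := hw.exists_mem_span_inner_eq fun _ => 1
  refine ⟨(‖p₀‖ + ‖p₁‖) ^ 2, fun a b ha hab => ?_⟩
  set s := (a - b) / 2
  set p := p₀ + s • p₁
  have hpW : p ∈ W := add_mem hp₀W (smul_mem _ _ hp₁W)
  have hpa : ‖p‖ ^ 2 ≤ a := by
    refine le_trans (pow_le_pow_left₀ (norm_nonneg _) ?_ 2) ha
    calc ‖p‖ ≤ ‖p₀‖ + |s| * ‖p₁‖ :=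
          (norm_add_le _ _).trans_eq (by rw [norm_smul, Real.norm_eq_abs])
      _ ≤ ‖p₀‖ + ‖p₁‖ := by
        gcongr
        exact mul_le_of_le_one_left (norm_nonneg _) (by rw [abs_div, abs_two]; linarith)
  obtain ⟨m, hm⟩ := exists_norm_eq Wᗮ (Real.sqrt_nonneg (a - ‖p‖ ^ 2))
  have hwm : ∀ i, ⟪w i, m⟫ = 0 := fun i =>
    inner_right_of_mem_orthogonal (subset_span (mem_range_self i)) m.2
  set v := p + m
  have hv : ‖v‖ ^ 2 = a := by
    rw [norm_add_sq_real, inner_right_of_mem_orthogonal hpW m.2]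
    change ‖p‖ ^ 2 + 2 * 0 + ‖m‖ ^ 2 = a
    rw [hm, Real.sq_sqrt (by linarith)]
    ring
  refine ⟨c i₀ + v, by simpa using hv, fun i hi => ?_⟩
  have hvi : c i₀ + v - c i = v - w ⟨i, hi⟩ := by simp only [w]; abel
  rw [hvi, norm_sub_sq_real, hv, real_inner_comm, inner_add_right, inner_add_right, hp₀,
    inner_smul_right, hp₁, hwm]
  ring

theorem AffineIndependent.exists_mk_eq_continuum_forall_norm_sub_eq {ι : Type*} [Fintype ι]
    {c : ι → E} (hc : AffineIndependent ℝ c) (hcard : Fintype.card ι ≤ finrank ℝ E) (i₀ : ι) :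
    ∃ I : Set ℝ, #I = 𝔠 ∧ ∀ a ∈ I, ∀ b ∈ I, ∃ x, ‖x - c i₀‖ = a ∧ ∀ i ≠ i₀, ‖x - c i‖ = b := by
  obtain ⟨K, hK⟩ := hc.exists_norm_sub_sq_eq hcard i₀
  set L := max K 0
  have hsq : ∀ a ∈ Ioo √L √(L + 1), 0 ≤ a ∧ L < a ^ 2 ∧ a ^ 2 < L + 1 := fun a ⟨h₁, h₂⟩ => by
    have ha : 0 ≤ a := (Real.sqrt_nonneg _).trans h₁.le
    exact ⟨ha, (Real.sqrt_lt' ((Real.sqrt_nonneg _).trans_lt h₁)).1 h₁, (Real.lt_sqrt ha).1 h₂⟩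
  refine ⟨Ioo √L √(L + 1), mk_Ioo_real (Real.sqrt_lt_sqrt (le_max_right _ _) (lt_add_one _)),
    fun a ha b hb => ?_⟩
  obtain ⟨ha₀, haL, haL'⟩ := hsq a ha
  obtain ⟨hb₀, hbL, hbL'⟩ := hsq b hb
  obtain ⟨x, hx₀, hx⟩ := hK (a ^ 2) (b ^ 2) ((le_max_left _ _).trans haL.le)
    (abs_sub_le_iff.2 ⟨by linarith, by linarith⟩)
  exact ⟨x, (sq_eq_sq₀ (norm_nonneg _) ha₀).1 hx₀,
    fun i hi => (sq_eq_sq₀ (norm_nonneg _) hb₀).1 (hx i hi)⟩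

end EuclideanSpheres

theorem continuum_le_aleph_one_iff_mk_real : continuum.{u} ≤ ℵ₁ ↔ #ℝ ≤ ℵ₁ := by
  rw [mk_real, ← lift_le.{u, 0}, lift_continuum, lift_aleph, Ordinal.lift_one]

theorem wellPlaced_iff_affineIndependent {d : ℕ} (hd : 1 ≤ d)
    {c : Fin d → EuclideanSpace ℝ (Fin d)} : WellPlaced c ↔ AffineIndependent ℝ c := by
  refine ⟨fun h => ?_, fun hc => ⟨⟨affineSpan ℝ (range c), ?_,
    fun i => mem_affineSpan ℝ (mem_range_self i)⟩,
    fun s _ => hc.comp_embedding (Function.Embedding.subtype (· ∈ s))⟩⟩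
  · exact (affineIndependent_equiv (Equiv.subtypeUnivEquiv Finset.mem_univ)).1
      (h.2 Finset.univ (by simp))
  · rw [direction_affineSpan, hc.finrank_vectorSpan (n := d - 1) (by simp; omega)]

theorem exists_sigmaSpray_cover {d : ℕ} (hd : 1 ≤ d) (hCH : #ℝ ≤ ℵ₁)
    {c : Fin d → EuclideanSpace ℝ (Fin d)} (hc : AffineIndependent ℝ c) :
    ∃ X : Fin d → Set (EuclideanSpace ℝ (Fin d)),
      ⋃ i, X i = Set.univ ∧ ∀ i, IsSigmaSpray (c i) (X i) := by
  have : Nonempty (Fin d) := ⟨⟨0, hd⟩⟩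
  exact exists_cover_countable_fibers hCH (fun i x => ‖x - c i‖)
    fun r => (hc.finite_setOf_forall_norm_sub_eq (by simp) r).countable

theorem mk_real_le_aleph_one_of_sigmaSpray_cover {d : ℕ} (hd : 2 ≤ d)
    {c : Fin d → EuclideanSpace ℝ (Fin d)} (hc : AffineIndependent ℝ c)
    {X : Fin d → Set (EuclideanSpace ℝ (Fin d))} (hX : ⋃ i, X i = Set.univ)
    (hspray : ∀ i, IsSigmaSpray (c i) (X i)) : #ℝ ≤ ℵ₁ := by
  obtain ⟨I, hI, hreal⟩ :=
    hc.exists_mk_eq_continuum_forall_norm_sub_eq (by simp) ⟨0, by omega⟩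
  rw [mk_real, ← hI]
  exact mk_le_aleph_one_of_cover (fun i x => ‖x - c i‖) X hX hspray (i₁ := ⟨1, hd⟩)
    (by simp [Fin.ext_iff]) hreal

theorem stmt4 (d : ℕ) (hd : 2 ≤ d) :
    ((continuum ≤ aleph 1 ↔
      (∀ c : Fin d → EuclideanSpace ℝ (Fin d), WellPlaced c →
        ∃ X : Fin d → Set (EuclideanSpace ℝ (Fin d)),
          (⋃ i, X i) = Set.univ ∧ ∀ i, IsSigmaSpray (c i) (X i))) ∧
     (continuum ≤ aleph 1 ↔
      (∃ c : Fin d → EuclideanSpace ℝ (Fin d), WellPlaced c ∧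
        ∃ X : Fin d → Set (EuclideanSpace ℝ (Fin d)),
          (⋃ i, X i) = Set.univ ∧ ∀ i, IsSigmaSpray (c i) (X i)))) := by
  have hd₁ : 1 ≤ d := by omega
  simp only [continuum_le_aleph_one_iff_mk_real, wellPlaced_iff_affineIndependent hd₁]
  have hc₀ : AffineIndependent ℝ (EuclideanSpace.basisFun (Fin d) ℝ) :=
    (EuclideanSpace.basisFun (Fin d) ℝ).toBasis.linearIndependent.affineIndependent
  refine ⟨⟨fun hCH c hc => exists_sigmaSpray_cover hd₁ hCH hc, fun h => ?_⟩,
    ⟨fun hCH => ⟨_, hc₀, exists_sigmaSpray_cover hd₁ hCH hc₀⟩, ?_⟩⟩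
  · obtain ⟨X, hX, hspray⟩ := h _ hc₀
    exact mk_real_le_aleph_one_of_sigmaSpray_cover hd hc₀ hX hspray
  · rintro ⟨c, hc, X, hX, hspray⟩
    exact mk_real_le_aleph_one_of_sigmaSpray_cover hd hc hX hspray
end

section
/- Let δ be an ordinal. Suppose ℝ² = X₁ ∪ X₂ where X₁ is an ℵ_δ-spray with some center c₁ ∈ ℝ² and X₂ is an ℵ_{δ+1}-spray with some center c₂ ∈ ℝ². Then 2^ℵ₀ ≤ ℵ_δ. -/
open Cardinal

/-- An ℵ_δ-spray with center `c`: every sphere centered at `c` meets `X` in a set of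
cardinality less than `ℵ_δ`. -/
def IsAlephSpray {d : ℕ} (δ : Ordinal) (c : EuclideanSpace ℝ (Fin d))
    (X : Set (EuclideanSpace ℝ (Fin d))) : Prop :=
  ∀ r : ℝ, Cardinal.mk {x ∈ X | ‖x - c‖ = r} < aleph δ

/-!
Suppose `κ = ℵ_δ < 𝔠`. The sections of `X₂` by spheres about `c₂` then have size at most `κ`.
If `c₁ = c₂`, a sphere about `c₁` has `𝔠` points, fewer than `𝔠` of them in `X₂`, so `𝔠` in `X₁`.
Otherwise, with `d = dist c₁ c₂`, pick `κ` radii `T ⊆ (d, 2d)`: the points of `X₂` on the spheres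
about `c₂` with radius in `T` are only `κ` many, so some `s ∈ (d, 2d)` is not the distance to `c₁`
of any of them. For every `t ∈ T` the spheres `S(c₁, s)` and `S(c₂, t)` meet (by connectedness of
`S(c₁, s)`), and each meeting point lies in `X₁`; so `X₁ ∩ S(c₁, s)` has at least `κ` points.
-/

open Set Metric

section

variable {E : Type} [NormedAddCommGroup E] [NormedSpace ℝ E]

theorem Icc_subset_image_dist_sphere (hE : 1 < Module.rank ℝ E) {c₁ c₂ : E} (hc : c₁ ≠ c₂)
    {s : ℝ} (hs : 0 ≤ s) :
    Icc |s - dist c₁ c₂| (s + dist c₁ c₂) ⊆ (dist · c₂) '' sphere c₁ s := by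
  set d := dist c₁ c₂
  have hd : 0 < d := dist_pos.2 hc
  set u : E := d⁻¹ • (c₂ - c₁)
  have hu : ‖u‖ = 1 := by
    simp [u, norm_smul, ← dist_eq_norm', d, hd.ne']
  have hc₂ : c₂ = c₁ + d • u := by
    simp [u, smul_smul, hd.ne']
  have hnear : dist (c₁ + s • u) c₂ = |s - d| := by
    rw [hc₂, dist_eq_norm, show c₁ + s • u - (c₁ + d • u) = (s - d) • u by module,
      norm_smul, hu, mul_one, Real.norm_eq_abs]
  have hfar : dist (c₁ - s • u) c₂ = s + d := by
    rw [hc₂, dist_eq_norm, show c₁ - s • u - (c₁ + d • u) = -((s + d) • u) by module,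
      norm_neg, norm_smul, hu, mul_one, Real.norm_of_nonneg (by positivity)]
  rw [← hnear, ← hfar]
  refine (isConnected_sphere hE c₁ hs).isPreconnected.intermediate_value ?_ ?_
    (continuous_id.dist continuous_const).continuousOn
  · simp [hu, abs_of_nonneg hs, norm_smul]
  · simp [hu, abs_of_nonneg hs, norm_smul]

theorem continuum_le_mk_sphere (hE : 1 < Module.rank ℝ E) (c : E) {r : ℝ} (hr : 0 < r) :
    𝔠 ≤ #(sphere c r) := by
  have : Nontrivial E := rank_pos_iff_nontrivial.1 (zero_lt_one.trans hE)
  obtain ⟨e, he⟩ := (NormedSpace.sphere_nonempty (x := c)).2 hr.le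
  have hce : dist c e = r := by rwa [dist_comm]
  have hne : c ≠ e := by rintro rfl; simp [hr.ne] at hce
  calc 𝔠 = #(Icc |r - dist c e| (r + dist c e)) := by
        rw [hce, sub_self, abs_zero, mk_Icc_real (by linarith)]
    _ ≤ #((dist · e) '' sphere c r) :=
        mk_le_mk_of_subset (Icc_subset_image_dist_sphere hE hne hr.le)
    _ ≤ #(sphere c r) := mk_image_le

theorem continuum_le_mk_inter_sphere (hE : 1 < Module.rank ℝ E) {X₁ X₂ : Set E}
    (hcover : X₁ ∪ X₂ = Set.univ) (c : E) {r : ℝ} (hr : 0 < r)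
    (h₂ : #(X₂ ∩ sphere c r : Set E) < 𝔠) :
    𝔠 ≤ #(X₁ ∩ sphere c r : Set E) := by
  by_contra! h₁
  refine (continuum_le_mk_sphere hE c hr).not_gt ?_
  calc #(sphere c r) = #((X₁ ∩ sphere c r) ∪ (X₂ ∩ sphere c r) : Set E) := by
        rw [← union_inter_distrib_right, hcover, univ_inter]
    _ ≤ #(X₁ ∩ sphere c r : Set E) + #(X₂ ∩ sphere c r : Set E) := mk_union_le _ _
    _ < 𝔠 := add_lt_of_lt aleph0_le_continuum h₁ h₂

theorem exists_le_mk_inter_sphere_of_ne (hE : 1 < Module.rank ℝ E) {κ : Cardinal} (hκ : ℵ₀ ≤ κ)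
    (hκc : κ < 𝔠) {X₁ X₂ : Set E} (hcover : X₁ ∪ X₂ = Set.univ) {c₁ c₂ : E} (hc : c₁ ≠ c₂)
    (h₂ : ∀ r, #(X₂ ∩ sphere c₂ r : Set E) ≤ κ) : ∃ s, κ ≤ #(X₁ ∩ sphere c₁ s : Set E) := by
  set d := dist c₁ c₂
  have hd : 0 < d := dist_pos.2 hc
  have hI : #(Ioo d (2 * d)) = 𝔠 := mk_Ioo_real (by linarith)
  obtain ⟨T, hTI, hT⟩ : ∃ T ⊆ Ioo d (2 * d), #T = κ := le_mk_iff_exists_subset.1 (hI ▸ hκc.le)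
  set B : Set ℝ := ⋃ t ∈ T, (dist · c₁) '' (X₂ ∩ sphere c₂ t)
  have hB : #B ≤ κ :=
    calc #B ≤ #T * ⨆ t : T, #((dist · c₁) '' (X₂ ∩ sphere c₂ t)) := mk_biUnion_le _ _
      _ ≤ κ * κ := by
        rw [hT]
        gcongr
        exact ciSup_le' fun t => mk_image_le.trans (h₂ t)
      _ = κ := mul_eq_self hκ
  obtain ⟨s, ⟨hds, hs2d⟩, hsB⟩ : (Ioo d (2 * d) \ B).Nonempty := by
    refine sdiff_nonempty.2 fun hIB => hκc.not_ge ?_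
    exact hI.symm.le.trans ((mk_le_mk_of_subset hIB).trans hB)
  have hTs : T ⊆ (dist · c₂) '' (X₁ ∩ sphere c₁ s) := by
    intro t ht
    obtain ⟨hdt, ht2d⟩ := hTI ht
    obtain ⟨p, hp, hpt⟩ := Icc_subset_image_dist_sphere hE hc (s := s) (by linarith)
      ⟨abs_sub_le_iff.2 ⟨by linarith, by linarith⟩, by linarith⟩
    have hpX : p ∈ X₁ ∪ X₂ := hcover ▸ mem_univ p
    exact ⟨p, ⟨hpX.resolve_right fun hpX₂ => hsB (mem_biUnion ht ⟨p, ⟨hpX₂, hpt⟩, hp⟩), hp⟩, hpt⟩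
  exact ⟨s, hT ▸ (mk_le_mk_of_subset hTs).trans mk_image_le⟩

theorem exists_le_mk_inter_sphere (hE : 1 < Module.rank ℝ E) {κ : Cardinal} (hκ : ℵ₀ ≤ κ)
    (hκc : κ < 𝔠) {X₁ X₂ : Set E} (hcover : X₁ ∪ X₂ = Set.univ) (c₁ c₂ : E)
    (h₂ : ∀ r, #(X₂ ∩ sphere c₂ r : Set E) ≤ κ) : ∃ s, κ ≤ #(X₁ ∩ sphere c₁ s : Set E) := by
  rcases eq_or_ne c₁ c₂ with rfl | hc
  · exact ⟨1, hκc.le.trans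
      (continuum_le_mk_inter_sphere hE hcover c₁ one_pos ((h₂ 1).trans_lt hκc))⟩
  · exact exists_le_mk_inter_sphere_of_ne hE hκ hκc hcover hc h₂

end

theorem IsAlephSpray.mk_inter_sphere_lt {d : ℕ} {δ : Ordinal} {c : EuclideanSpace ℝ (Fin d)}
    {X : Set (EuclideanSpace ℝ (Fin d))} (h : IsAlephSpray δ c X) (r : ℝ) :
    #(X ∩ sphere c r : Set _) < ℵ_ δ := by
  convert h r using 3
  ext x
  exact and_congr_right' mem_sphere_iff_norm

theorem one_lt_rank_euclideanSpace_fin_two : 1 < Module.rank ℝ (EuclideanSpace ℝ (Fin 2)) := by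
  rw [← Module.finrank_eq_rank, finrank_euclideanSpace_fin]
  norm_num

theorem stmt5 (δ : Ordinal) (c₁ c₂ : EuclideanSpace ℝ (Fin 2))
    (X₁ X₂ : Set (EuclideanSpace ℝ (Fin 2)))
    (h1 : IsAlephSpray δ c₁ X₁) (h2 : IsAlephSpray (δ + 1) c₂ X₂)
    (hcover : X₁ ∪ X₂ = Set.univ) :
    continuum ≤ aleph δ := by
  by_contra! hlt
  have h₂ (r : ℝ) : #(X₂ ∩ sphere c₂ r : Set _) ≤ ℵ_ δ := by
    rw [← Order.lt_succ_iff, succ_aleph]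
    exact h2.mk_inter_sphere_lt r
  obtain ⟨s, hs⟩ := exists_le_mk_inter_sphere one_lt_rank_euclideanSpace_fin_two
    (aleph0_le_aleph δ) hlt hcover c₁ c₂ h₂
  exact (h1.mk_inter_sphere_lt s).not_ge hs
end

section
/- The following are equivalent: (a) CH, i.e., 2^ℵ₀ ≤ ℵ₁; (b) for all distinct points c₁, c₂ ∈ ℝ² there are sets X₁, X₂ with X₁ ∪ X₂ = ℝ² such that X₁ is a σ-spray with center c₁ and X₂ is a σ-spray with center c₂. -/
/-!
Under CH, well-order `ℝ` in type `ω₁` and put `x` into `X₁` when `‖x - c₂‖` comes no later than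
`‖x - c₁‖`, into `X₂` otherwise. Two circles with distinct centers meet in at most two points, so a
circle about `c₁` meets `X₁` only on the countably many circles about `c₂` whose radius precedes its
own.

Conversely, take an interval `I` of radii such that every circle about `c₁` meets every circle
about `c₂` with radii in `I`. If `#I > ℵ₁`, choose `R ⊆ I` with `#R = ℵ₁`. The points of `X₁` on
circles about `c₁` with radius in `R` have at most `ℵ₁` distances to `c₂`, so some `s ∈ I` is not
among them; the circle of radius `s` about `c₂` meets `X₂` in countably many points, so some `r ∈ R`
is missed as well, and a common point of the two circles lies in neither `X₁` nor `X₂`.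
-/

open Cardinal

open Set Ordinal

universe u v

section CountableFibres

variable {α : Type u} {β : Type v}

theorem countable_Iic_toType_omega_one (a : (ω₁ : Ordinal.{v}).ToType) : (Iic a).Countable := by
  rw [← Iio_union_right]
  refine Countable.union ?_ (countable_singleton a)
  rw [← le_aleph0_iff_set_countable, ← lt_aleph_one_iff]
  exact (mk_Iio_lt a (by simp)).trans_eq (by simp)

theorem countable_setOf_comp_le_and_eq {γ : Type*} [Preorder γ] {e : β → γ}
    (he : ∀ b, {b' | e b' ≤ e b}.Countable) {f g : α → β}
    (hfg : ∀ a b, {x | f x = a ∧ g x = b}.Countable) (a : β) :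
    {x | e (g x) ≤ e (f x) ∧ f x = a}.Countable := by
  refine ((he a).biUnion fun b _ => hfg a b).mono ?_
  rintro x ⟨hle, rfl⟩
  exact mem_biUnion hle ⟨rfl, rfl⟩

theorem exists_union_eq_univ_countable_fibres (hβ : #β ≤ ℵ₁) {f g : α → β}
    (hfg : ∀ a b, {x | f x = a ∧ g x = b}.Countable) :
    ∃ X Y : Set α, X ∪ Y = Set.univ ∧ (∀ a, {x ∈ X | f x = a}.Countable) ∧
      ∀ b, {x ∈ Y | g x = b}.Countable := by
  obtain ⟨e⟩ : Nonempty (β ↪ (ω₁ : Ordinal.{v}).ToType) := by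
    rwa [← le_def, mk_toType, card_omega]
  have he : ∀ b, {b' | e b' ≤ e b}.Countable := fun b =>
    (countable_Iic_toType_omega_one (e b)).preimage e.injective
  refine ⟨{x | e (g x) ≤ e (f x)}, {x | e (f x) ≤ e (g x)}, ?_,
    countable_setOf_comp_le_and_eq he hfg,
    countable_setOf_comp_le_and_eq he fun a b => by simpa only [and_comm] using hfg b a⟩
  exact eq_univ_of_forall fun x => le_total (e (g x)) (e (f x))

theorem mk_le_aleph_one_of_union_eq_univ {f g : α → β} {I : Set β}
    (hI : ∀ r ∈ I, ∀ s ∈ I, ∃ x, f x = r ∧ g x = s) {X Y : Set α} (hXY : X ∪ Y = Set.univ)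
    (hX : ∀ a, {x ∈ X | f x = a}.Countable) (hY : ∀ b, {x ∈ Y | g x = b}.Countable) :
    #I ≤ ℵ₁ := by
  by_contra! hI_gt
  obtain ⟨R, hRI, hR⟩ := le_mk_iff_exists_subset.1 hI_gt.le
  set A := ⋃ r ∈ R, g '' {x ∈ X | f x = r}
  have hA : #A ≤ ℵ₁ :=
    calc #A ≤ #R * ⨆ r : R, #(g '' {x ∈ X | f x = r}) := mk_biUnion_le _ R
      _ ≤ ℵ₁ * ℵ₀ := mul_le_mul' hR.le (ciSup_le' fun r => ((hX r).image g).le_aleph0)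
      _ = ℵ₁ := mul_aleph0_eq (aleph0_le_aleph 1)
  obtain ⟨s, hsI, hsA⟩ : ∃ s ∈ I, s ∉ A := not_subset.1 fun hIA =>
    (hA.trans_lt hI_gt).not_ge (mk_le_mk_of_subset hIA)
  obtain ⟨r, hrR, hrB⟩ : ∃ r ∈ R, r ∉ f '' {x ∈ Y | g x = s} := not_subset.1 fun hRB => by
    have := le_aleph0_iff_set_countable.2 (((hY s).image f).mono hRB)
    exact (aleph0_lt_aleph_one.trans_eq hR.symm).not_ge this
  obtain ⟨x, rfl, rfl⟩ := hI r (hRI hrR) s hsI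
  rcases (hXY ▸ mem_univ x : x ∈ X ∪ Y) with hx | hx
  · exact hsA (mem_biUnion hrR ⟨x, ⟨hx, rfl⟩, rfl⟩)
  · exact hrB ⟨x, ⟨hx, rfl⟩, rfl⟩

end CountableFibres

section Circles

variable {E : Type*} [NormedAddCommGroup E] [InnerProductSpace ℝ E]

theorem finite_setOf_dist_eq_and_dist_eq [FiniteDimensional ℝ E] (hE : Module.finrank ℝ E = 2)
    {c₁ c₂ : E} (hc : c₁ ≠ c₂) (r s : ℝ) : {x | dist x c₁ = r ∧ dist x c₂ = s}.Finite := by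
  rcases (Set.subsingleton_or_nontrivial {x | dist x c₁ = r ∧ dist x c₂ = s}) with
    h | ⟨p, hp, q, hq, hpq⟩
  · exact h.finite
  refine (toFinite {p, q}).subset fun x hx => ?_
  exact EuclideanGeometry.eq_of_dist_eq_of_dist_eq_of_finrank_eq_two hE hc hpq
    hp.1 hq.1 hx.1 hp.2 hq.2 hx.2

/-- The circle of radius `r` about `c₁` is connected and contains the points
`c₁ ± (r / d) (c₂ - c₁)`, at distances `|d - r|` and `d + r` from `c₂`. -/
theorem exists_dist_eq_and_dist_eq (hE : 1 < Module.rank ℝ E) {c₁ c₂ : E} (hc : c₁ ≠ c₂)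
    {r s : ℝ} (hs : s ∈ Icc |dist c₁ c₂ - r| (dist c₁ c₂ + r)) :
    ∃ x, dist x c₁ = r ∧ dist x c₂ = s := by
  set d := dist c₁ c₂
  have hd : 0 < d := dist_pos.2 hc
  have hr : 0 ≤ r := by linarith [le_abs_self (d - r), hs.1, hs.2]
  have hdist_left : ∀ t : ℝ, |t| = r / d → dist (AffineMap.lineMap c₁ c₂ t) c₁ = r := fun t ht => by
    rw [dist_lineMap_left, Real.norm_eq_abs, ht, div_mul_cancel₀ _ hd.ne']
  have hnear : dist (AffineMap.lineMap c₁ c₂ (r / d)) c₂ = |d - r| :=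
    calc _ = |1 - r / d| * d := by rw [dist_lineMap_right, Real.norm_eq_abs]
      _ = |(1 - r / d) * d| := by rw [abs_mul, abs_of_pos hd]
      _ = |d - r| := by congr 1; field_simp
  have hfar : dist (AffineMap.lineMap c₁ c₂ (-(r / d))) c₂ = d + r :=
    calc _ = |1 - -(r / d)| * d := by rw [dist_lineMap_right, Real.norm_eq_abs]
      _ = (1 + r / d) * d := by rw [sub_neg_eq_add, abs_of_nonneg (by positivity)]
      _ = d + r := by field_simp
  obtain ⟨x, hx, hxs⟩ := (isPreconnected_sphere hE c₁ r).intermediate_value (f := (dist · c₂))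
    (hdist_left (r / d) (abs_of_nonneg (by positivity)))
    (hdist_left (-(r / d)) (by rw [abs_neg, abs_of_nonneg (by positivity)]))
    (continuous_id.dist continuous_const).continuousOn (by rwa [hnear, hfar])
  exact ⟨x, hx, hxs⟩

end Circles

theorem continuum_le_aleph_one_univ_iff : continuum.{u} ≤ ℵ₁ ↔ continuum.{0} ≤ ℵ₁ := by
  simpa using lift_le.{u} (a := continuum.{0}) (b := ℵ₁)

theorem exists_isSigmaSpray_union_eq_univ (hCH : continuum.{0} ≤ ℵ₁)
    {c₁ c₂ : EuclideanSpace ℝ (Fin 2)} (hc : c₁ ≠ c₂) :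
    ∃ X₁ X₂ : Set (EuclideanSpace ℝ (Fin 2)),
      X₁ ∪ X₂ = Set.univ ∧ IsSigmaSpray c₁ X₁ ∧ IsSigmaSpray c₂ X₂ :=
  exists_union_eq_univ_countable_fibres (mk_real.trans_le hCH) fun r s => by
    simpa only [← dist_eq_norm] using
      (finite_setOf_dist_eq_and_dist_eq finrank_euclideanSpace_fin hc r s).countable

theorem continuum_le_aleph_one_of_isSigmaSpray {d : ℕ} (hd : 2 ≤ d)
    {c₁ c₂ : EuclideanSpace ℝ (Fin d)} (hc : c₁ ≠ c₂) {X₁ X₂ : Set (EuclideanSpace ℝ (Fin d))} (hX : X₁ ∪ X₂ = Set.univ)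
    (h₁ : IsSigmaSpray c₁ X₁) (h₂ : IsSigmaSpray c₂ X₂) : continuum.{0} ≤ ℵ₁ := by
  have hδ : 0 < dist c₁ c₂ := dist_pos.2 hc
  rw [← mk_Ioo_real (by linarith : dist c₁ c₂ < 2 * dist c₁ c₂)]
  refine mk_le_aleph_one_of_union_eq_univ (fun r hr s hs => ?_) hX h₁ h₂
  simp only [← dist_eq_norm]
  refine exists_dist_eq_and_dist_eq ?_ hc ⟨?_, ?_⟩
  · exact Module.one_lt_rank_of_one_lt_finrank (finrank_euclideanSpace_fin (𝕜 := ℝ) ▸ hd)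
  · rw [abs_sub_le_iff]; constructor <;> linarith [hr.1, hr.2, hs.1, hs.2]
  · linarith [hr.1, hs.2]

theorem stmt6 :
    continuum ≤ aleph 1 ↔
      ∀ c₁ c₂ : EuclideanSpace ℝ (Fin 2), c₁ ≠ c₂ →
        ∃ X₁ X₂ : Set (EuclideanSpace ℝ (Fin 2)),
          X₁ ∪ X₂ = Set.univ ∧ IsSigmaSpray c₁ X₁ ∧ IsSigmaSpray c₂ X₂ := by
  rw [continuum_le_aleph_one_univ_iff]
  refine ⟨fun hCH c₁ c₂ hc => exists_isSigmaSpray_union_eq_univ hCH hc, fun H => ?_⟩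
  obtain ⟨c₁, c₂, hc⟩ := exists_pair_ne (EuclideanSpace ℝ (Fin 2))
  obtain ⟨X₁, X₂, hX, h₁, h₂⟩ := H c₁ c₂ hc
  exact continuum_le_aleph_one_of_isSigmaSpray le_rfl hc hX h₁ h₂
end

section
/- Let n ≥ d ≥ 3 and suppose the points c₁, …, c_n all belong to an affine hyperplane H of ℝ^d. Suppose there is an affine subspace L ⊆ H of dimension d−2 such that the set {π(c₁), …, π(c_n)} has at most d−1 elements, where π : H → L is the orthogonal projection. Then there are no sets X₁, …, X_n covering ℝ^d such that each X_i is a spray with center c_i. -/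
/-!
Let `v` be a unit normal of `H`. All centers lie in `H`, and the feet `q i` lie in `L`, so every
point `x` of `L + ℝ v` satisfies `‖x - c i‖² = ‖x - q i‖² + ‖c i - q i‖²`.

If the feet do not affinely span `L`, take a unit `w ∈ L.direction` orthogonal to them: the
circle `q i₀ + cos θ • w + sin θ • v` is equidistant from every center, so each `X i` contains
only finitely many of its points.

Otherwise the at most `d - 1` distinct feet are affinely independent and span `L`, and the
squared distances of a point of `L + ℝ v` to them can be prescribed freely near a large common
value. Varying the distances to two of the feet gives a two-parameter family of points in
which the distance to each center depends on only one parameter, and a Fubini-type counting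
argument (an infinite set of values for one parameter, an uncountable one for the other)
produces a point of the family outside every `X i`.
-/

open Set Function Module RealInnerProductSpace

theorem Set.not_countable_Icc_zero_one : ¬(Icc (0 : ℝ) 1).Countable := by
  rw [← Cardinal.le_aleph0_iff_set_countable, Cardinal.mk_Icc_real zero_lt_one]
  exact Cardinal.aleph0_lt_continuum.not_ge

/-- The finite vertical fibers above a countably infinite part of `S` cannot exhaust the
uncountable `T`; once `b ∈ T` avoids them, only finitely many first coordinates remain bad. -/
theorem exists_mem_prod_forall_notMem_of_finite_fibers {ι α β : Type*} [Finite ι]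
    {S : Set α} {T : Set β} (hS : S.Infinite) (hT : ¬T.Countable) {A : ι → Set (α × β)}
    (hA : ∀ i, (∀ a, {b | (a, b) ∈ A i}.Finite) ∨ ∀ b, {a | (a, b) ∈ A i}.Finite) :
    ∃ a ∈ S, ∃ b ∈ T, ∀ i, (a, b) ∉ A i := by
  classical
  let I := {i | ∀ a, {b | (a, b) ∈ A i}.Finite}
  let f := hS.natEmbedding
  obtain ⟨b, hbT, hb⟩ : ∃ b ∈ T, b ∉ ⋃ m, ⋃ i ∈ I, {b | ((f m : α), b) ∈ A i} := by
    refine not_subset.1 fun h => hT (Countable.mono h (countable_iUnion fun m => ?_))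
    exact (Finite.biUnion (toFinite I) fun i hi => hi (f m)).countable
  have hfin : (⋃ i ∈ Iᶜ, {a | (a, b) ∈ A i}).Finite :=
    Finite.biUnion (toFinite _) fun i hi => (hA i).resolve_left hi b
  obtain ⟨m, hm⟩ : ∃ m, (f m : α) ∉ ⋃ i ∈ Iᶜ, {a | (a, b) ∈ A i} := by
    by_contra! h
    exact infinite_range_of_injective (Subtype.val_injective.comp f.injective)
      (hfin.subset (range_subset_iff.2 h))
  refine ⟨f m, (f m).2, b, hbT, fun i hi => ?_⟩
  by_cases hiI : i ∈ I
  · exact hb (mem_iUnion.2 ⟨m, mem_biUnion hiI hi⟩)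
  · exact hm (mem_biUnion hiI hi)

theorem Set.Finite.affineIndependent_of_ncard_le {k V P : Type*} [DivisionRing k]
    [AddCommGroup V] [Module k V] [AddTorsor V P] {s : Set P} (hs : s.Finite)
    (h : s.ncard ≤ finrank k (vectorSpan k s) + 1) : AffineIndependent k ((↑) : s → P) := by
  have := hs.fintype
  rcases isEmpty_or_nonempty s with hse | hsn
  · exact affineIndependent_of_subsingleton k _
  rw [affineIndependent_iff_le_finrank_vectorSpan k _
    (Nat.succ_pred_eq_of_pos Fintype.card_pos).symm, Subtype.range_coe,
    ← Nat.card_eq_fintype_card, Nat.card_coe_set_eq, Nat.pred_eq_sub_one]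
  omega

section InnerProductSpace

variable {E ι : Type*} [NormedAddCommGroup E] [InnerProductSpace ℝ E] [Fintype ι]

theorem Submodule.exists_mem_norm_eq_one_of_ne_bot {K : Submodule ℝ E} (hK : K ≠ ⊥) :
    ∃ v ∈ K, ‖v‖ = 1 := by
  obtain ⟨v, hv, hv0⟩ := Submodule.exists_mem_ne_zero_of_ne_bot hK
  exact ⟨_, K.smul_mem _ hv, norm_smul_inv_norm hv0⟩

theorem AffineIndependent.exists_linearMap_inner_sub_eq {Q : ι → E} (hQ : AffineIndependent ℝ Q) :
    ∃ Ψ : (ι → ℝ) →ₗ[ℝ] E, ∀ z, Ψ z ∈ vectorSpan ℝ (range Q) ∧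
      ∀ j j', ⟪Q j - Q j', Ψ z⟫ = z j - z j' := by
  classical
  rcases isEmpty_or_nonempty ι with hι | ⟨⟨j₀⟩⟩
  · exact ⟨0, fun z => ⟨zero_mem _, fun j => isEmptyElim j⟩⟩
  let V := vectorSpan ℝ (range Q)
  have hspan : V = Submodule.span ℝ (range fun j : {j // j ≠ j₀} => Q j - Q j₀) :=
    vectorSpan_range_eq_span_range_vsub_right_ne ℝ Q j₀
  let Φ : V →ₗ[ℝ] {j // j ≠ j₀} → ℝ :=
    LinearMap.pi fun j => (innerₛₗ ℝ (Q j - Q j₀)).comp V.subtype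
  have hΦ : Injective Φ := by
    rw [← LinearMap.ker_eq_bot, Submodule.eq_bot_iff]
    intro y hy
    have hV : Submodule.span ℝ (range fun j : {j // j ≠ j₀} => Q j - Q j₀) ≤
        LinearMap.ker (innerₛₗ ℝ (y : E)) := by
      rw [Submodule.span_le]
      rintro _ ⟨j, rfl⟩
      exact (real_inner_comm _ _).trans (congr_fun hy j)
    exact Subtype.ext (inner_self_eq_zero.1 (hV (hspan ▸ y.2)))
  have hdim : finrank ℝ V = finrank ℝ ({j // j ≠ j₀} → ℝ) := by
    rw [finrank_fintype_fun_eq_card, hspan]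
    exact finrank_span_eq_card ((affineIndependent_iff_linearIndependent_vsub ℝ Q j₀).1 hQ)
  let e := Φ.linearEquivOfInjective hΦ hdim
  let δ : (ι → ℝ) →ₗ[ℝ] {j // j ≠ j₀} → ℝ :=
    LinearMap.pi fun j => LinearMap.proj (R := ℝ) (φ := fun _ : ι => ℝ) j - LinearMap.proj j₀
  refine ⟨V.subtype ∘ₗ e.symm.toLinearMap ∘ₗ δ, fun z => ⟨(e.symm (δ z)).2, ?_⟩⟩
  have key j : ⟪Q j - Q j₀, (e.symm (δ z) : E)⟫ = z j - z j₀ := by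
    by_cases hj : j = j₀
    · simp [hj]
    · exact congr_fun (e.apply_symm_apply (δ z)) ⟨j, hj⟩
  intro j j'
  rw [show Q j - Q j' = (Q j - Q j₀) - (Q j' - Q j₀) by abel, inner_sub_left]
  simp only [LinearMap.coe_comp, Submodule.coe_subtype, comp_apply, LinearEquiv.coe_coe, key]
  ring

/-- The point is `y + Q j₀ + t • v` with `y` in the span solving the linear equations that the
prescribed differences of squared distances impose; `y` stays bounded, so for a large enough
shift `s` the remaining squared length `t ^ 2` is nonnegative. -/
theorem AffineIndependent.exists_norm_add_smul_sub_sq_eq [Nonempty ι] {Q : ι → E}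
    (hQ : AffineIndependent ℝ Q) {v : E} (hv : v ∈ (vectorSpan ℝ (range Q))ᗮ) (hv1 : ‖v‖ = 1) :
    ∃ s : ℝ, ∀ ξ ∈ univ.pi fun _ => Icc (0 : ℝ) 1, ∃ p ∈ affineSpan ℝ (range Q), ∃ t : ℝ,
      ∀ j, ‖p + t • v - Q j‖ ^ 2 = ξ j + s := by
  obtain ⟨Ψ, hΨ⟩ := hQ.exists_linearMap_inner_sub_eq
  obtain ⟨j₀⟩ := ‹Nonempty ι›
  let z (ξ : ι → ℝ) (j : ι) : ℝ := (‖Q j - Q j₀‖ ^ 2 - ξ j) / 2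
  obtain ⟨K, hK⟩ := (isCompact_univ_pi fun _ => isCompact_Icc).exists_bound_of_continuousOn
    (Ψ.continuous_of_finiteDimensional.comp (by fun_prop : Continuous z)).continuousOn
  refine ⟨K ^ 2, fun ξ hξ => ⟨Ψ (z ξ) + Q j₀, ?_, √(ξ j₀ + K ^ 2 - ‖Ψ (z ξ)‖ ^ 2), fun j => ?_⟩⟩
  · refine AffineSubspace.vadd_mem_of_mem_direction ?_ (mem_affineSpan ℝ (mem_range_self j₀))
    exact (direction_affineSpan ℝ (range Q)).symm ▸ (hΨ _).1
  set y := Ψ (z ξ)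
  have hy : ‖y‖ ^ 2 ≤ K ^ 2 := pow_le_pow_left₀ (norm_nonneg _) (hK ξ hξ) 2
  have hξ₀ : 0 ≤ ξ j₀ := (hξ j₀ trivial).1
  have horth : ⟪Q j₀ - Q j + y, v⟫ = 0 :=
    Submodule.inner_right_of_mem_orthogonal (Submodule.add_mem _
      (vsub_mem_vectorSpan ℝ (mem_range_self j₀) (mem_range_self j)) (hΨ _).1) hv
  have hsq : ‖√(ξ j₀ + K ^ 2 - ‖y‖ ^ 2) • v‖ ^ 2 = ξ j₀ + K ^ 2 - ‖y‖ ^ 2 := by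
    rw [norm_smul, hv1, mul_one, Real.norm_eq_abs, sq_abs, Real.sq_sqrt (by linarith)]
  calc ‖y + Q j₀ + √(ξ j₀ + K ^ 2 - ‖y‖ ^ 2) • v - Q j‖ ^ 2
      = ‖(Q j₀ - Q j + y) + √(ξ j₀ + K ^ 2 - ‖y‖ ^ 2) • v‖ ^ 2 := by congr 2; abel
    _ = ‖Q j - Q j₀‖ ^ 2 + 2 * ⟪Q j₀ - Q j, y⟫ + ξ j₀ + K ^ 2 := by
      rw [norm_add_sq_real, real_inner_smul_right, horth, hsq, norm_add_sq_real, norm_sub_rev]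
      ring
    _ = ξ j + K ^ 2 := by
      rw [(hΨ _).2]
      simp only [z, sub_self, norm_zero]
      ring

end InnerProductSpace

section Spray

variable {d : ℕ} {ι α β : Type*} [Finite ι] {c : ι → EuclideanSpace ℝ (Fin d)}
  {X : ι → Set (EuclideanSpace ℝ (Fin d))}

theorem IsSpray.finite_of_injOn {c : EuclideanSpace ℝ (Fin d)} {X : Set (EuclideanSpace ℝ (Fin d))}
    (hX : IsSpray c X) {s : Set α} {x : α → EuclideanSpace ℝ (Fin d)} (hx : InjOn x s) {r : ℝ}
    (hr : ∀ a ∈ s, ‖x a - c‖ ^ 2 = r) : {a ∈ s | x a ∈ X}.Finite :=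
  (hX √r).of_injOn (fun a ha => by exact ⟨ha.2, by rw [← hr a ha.1, Real.sqrt_sq (norm_nonneg _)]⟩)
    (hx.mono fun _ ha => ha.1)

theorem exists_notMem_iUnion_sprays_of_injOn (hX : ∀ i, IsSpray (c i) (X i)) {s : Set α}
    (hs : s.Infinite) {x : α → EuclideanSpace ℝ (Fin d)} (hx : InjOn x s) (r : ι → ℝ)
    (hr : ∀ i, ∀ a ∈ s, ‖x a - c i‖ ^ 2 = r i) : ∃ a ∈ s, x a ∉ ⋃ i, X i := by
  by_contra! h
  refine hs ((finite_iUnion fun i => (hX i).finite_of_injOn hx (hr i)).subset fun a ha => ?_)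
  obtain ⟨i, hi⟩ := mem_iUnion.1 (h a ha)
  exact mem_iUnion.2 ⟨i, ha, hi⟩

theorem exists_notMem_iUnion_sprays_of_injOn_prod (hX : ∀ i, IsSpray (c i) (X i)) {S : Set α}
    {T : Set β} (hS : S.Infinite) (hT : ¬T.Countable) {x : α → β → EuclideanSpace ℝ (Fin d)}
    (hx : InjOn (uncurry x) (S ×ˢ T))
    (hr : ∀ i, (∃ r : α → ℝ, ∀ a ∈ S, ∀ b ∈ T, ‖x a b - c i‖ ^ 2 = r a) ∨
      ∃ r : β → ℝ, ∀ a ∈ S, ∀ b ∈ T, ‖x a b - c i‖ ^ 2 = r b) :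
    ∃ a ∈ S, ∃ b ∈ T, x a b ∉ ⋃ i, X i := by
  let A i : Set (α × β) := {p | p ∈ S ×ˢ T ∧ x p.1 p.2 ∈ X i}
  have hA i : (∀ a, {b | (a, b) ∈ A i}.Finite) ∨ ∀ b, {a | (a, b) ∈ A i}.Finite := by
    refine (hr i).imp (fun ⟨r, hr⟩ a => ?_) fun ⟨r, hr⟩ b => ?_
    · by_cases ha : a ∈ S
      · refine ((hX i).finite_of_injOn (s := T) (fun b hb b' hb' h => ?_) (hr a ha)).subset
          fun b hb => ⟨hb.1.2, hb.2⟩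
        exact (Prod.ext_iff.1 (@hx (a, b) ⟨ha, hb⟩ (a, b') ⟨ha, hb'⟩ h)).2
      · exact finite_empty.subset fun b hb => ha hb.1.1
    · by_cases hb : b ∈ T
      · refine ((hX i).finite_of_injOn (s := S) (x := (x · b)) (fun a ha a' ha' h => ?_)
          (fun a ha => hr a ha b hb)).subset fun a ha => ⟨ha.1.1, ha.2⟩
        exact (Prod.ext_iff.1 (@hx (a, b) ⟨ha, hb⟩ (a', b) ⟨ha', hb⟩ h)).1
      · exact finite_empty.subset fun a ha => hb ha.1.2
  obtain ⟨a, ha, b, hb, hab⟩ := exists_mem_prod_forall_notMem_of_finite_fibers hS hT hA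
  refine ⟨a, ha, b, hb, fun h => ?_⟩
  obtain ⟨i, hi⟩ := mem_iUnion.1 h
  exact hab i ⟨⟨ha, hb⟩, hi⟩

theorem iUnion_sprays_ne_univ_of_orthonormal_pair (hX : ∀ i, IsSpray (c i) (X i))
    (o : EuclideanSpace ℝ (Fin d)) {w v : EuclideanSpace ℝ (Fin d)} (hw : ‖w‖ = 1) (hv : ‖v‖ = 1)
    (hwv : ⟪w, v⟫ = 0) (hc : ∀ i, ⟪w, c i - o⟫ = 0 ∧ ⟪v, c i - o⟫ = 0) :
    ⋃ i, X i ≠ univ := by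
  let x (θ : ℝ) := o + Real.cos θ • w + Real.sin θ • v
  have hww : ⟪w, w⟫ = 1 := by rw [real_inner_self_eq_norm_sq, hw, one_pow]
  have hvv : ⟪v, v⟫ = 1 := by rw [real_inner_self_eq_norm_sq, hv, one_pow]
  have hxo θ : x θ - o = Real.cos θ • w + Real.sin θ • v := by simp only [x]; abel
  have hcos θ : ⟪w, x θ - o⟫ = Real.cos θ := by
    simp only [hxo, inner_add_right, real_inner_smul_right, hww, hwv, mul_one, mul_zero, add_zero]
  have hx : InjOn x (Icc 0 Real.pi) := fun θ hθ θ' hθ' h =>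
    Real.injOn_cos hθ hθ' (by rw [← hcos θ, ← hcos θ', h])
  have hdist i θ : ‖x θ - c i‖ ^ 2 = ‖c i - o‖ ^ 2 + 1 := by
    obtain ⟨hwc, hvc⟩ := hc i
    rw [show x θ - c i = (x θ - o) - (c i - o) by abel, hxo]
    generalize c i - o = u at hwc hvc ⊢
    rw [← real_inner_self_eq_norm_sq, ← real_inner_self_eq_norm_sq]
    simp only [inner_add_left, inner_add_right, inner_sub_left, inner_sub_right,
      real_inner_smul_left, real_inner_smul_right, real_inner_comm w v, hww,
      hvv, hwv, hwc, hvc, (real_inner_comm w u).trans hwc, (real_inner_comm v u).trans hvc]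
    nlinarith [Real.sin_sq_add_cos_sq θ]
  intro hcover
  obtain ⟨θ, -, hθ⟩ := exists_notMem_iUnion_sprays_of_injOn hX (Icc_infinite Real.pi_pos) hx _
    fun i θ _ => hdist i θ
  exact hθ (hcover ▸ mem_univ _)

theorem iUnion_sprays_ne_univ_of_vectorSpan_lt (hX : ∀ i, IsSpray (c i) (X i)) [Nonempty ι]
    {q : ι → EuclideanSpace ℝ (Fin d)} {K : Submodule ℝ (EuclideanSpace ℝ (Fin d))}
    (hlt : vectorSpan ℝ (range q) < K) {v : EuclideanSpace ℝ (Fin d)} (hv : v ∈ Kᗮ)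
    (hv1 : ‖v‖ = 1) (hc : ∀ i, c i - q i ∈ (K ⊔ ℝ ∙ v)ᗮ) :
    ⋃ i, X i ≠ univ := by
  obtain ⟨w, ⟨hwq, hwK⟩, hw1⟩ : ∃ w ∈ (vectorSpan ℝ (range q))ᗮ ⊓ K, ‖w‖ = 1 := by
    refine Submodule.exists_mem_norm_eq_one_of_ne_bot fun h => hlt.ne ?_
    simpa [h] using Submodule.sup_orthogonal_inf_of_hasOrthogonalProjection hlt.le
  obtain ⟨i₀⟩ := ‹Nonempty ι›
  refine iUnion_sprays_ne_univ_of_orthonormal_pair hX (q i₀) hw1 hv1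
    (Submodule.inner_right_of_mem_orthogonal hwK hv) fun i => ?_
  have hqq : q i - q i₀ ∈ vectorSpan ℝ (range q) :=
    vsub_mem_vectorSpan ℝ (mem_range_self i) (mem_range_self i₀)
  rw [show c i - q i₀ = (c i - q i) + (q i - q i₀) by abel, inner_add_right, inner_add_right,
    Submodule.inner_right_of_mem_orthogonal (Submodule.mem_sup_left hwK) (hc i),
    Submodule.inner_right_of_mem_orthogonal
      (Submodule.mem_sup_right (Submodule.mem_span_singleton_self v)) (hc i),
    Submodule.inner_left_of_mem_orthogonal hqq hwq,
    Submodule.inner_left_of_mem_orthogonal (hlt.le hqq) hv]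
  simp

theorem iUnion_sprays_ne_univ_of_affineIndependent (hX : ∀ i, IsSpray (c i) (X i))
    {q : ι → EuclideanSpace ℝ (Fin d)} (hq : AffineIndependent ℝ ((↑) : range q → EuclideanSpace ℝ (Fin d)))
    (hne : (range q).Nontrivial) {v : EuclideanSpace ℝ (Fin d)}
    (hv : v ∈ (vectorSpan ℝ (range q))ᗮ) (hv1 : ‖v‖ = 1)
    (hc : ∀ i, c i - q i ∈ (vectorSpan ℝ (range q) ⊔ ℝ ∙ v)ᗮ) :
    ⋃ i, X i ≠ univ := by
  classical
  have := hne.coe_sort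
  have := Fintype.ofFinite (range q)
  obtain ⟨s, hs⟩ := hq.exists_norm_add_smul_sub_sq_eq (by rwa [Subtype.range_coe]) hv1
  choose! p hp t ht using hs
  obtain ⟨j₁, j₂, hj⟩ := exists_pair_ne (range q)
  let ξ (a b : ℝ) : range q → ℝ := Pi.single j₁ a + Pi.single j₂ b
  have hξ₁ a b : ξ a b j₁ = a := by simp [ξ, hj]
  have hξ₂ a b : ξ a b j₂ = b := by simp [ξ, hj.symm]
  have hξ : ∀ a ∈ Icc (0 : ℝ) 1, ∀ b ∈ Icc (0 : ℝ) 1, ξ a b ∈ univ.pi fun _ => Icc (0 : ℝ) 1 := by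
    intro a ha b hb j _
    by_cases h₁ : j = j₁
    · subst h₁; rw [hξ₁]; exact ha
    by_cases h₂ : j = j₂
    · subst h₂; rw [hξ₂]; exact hb
    · simp [ξ, h₁, h₂]
  let x (a b : ℝ) := p (ξ a b) + t (ξ a b) • v
  have hxq : ∀ a ∈ Icc (0 : ℝ) 1, ∀ b ∈ Icc (0 : ℝ) 1, ∀ j : range q,
      ‖x a b - j‖ ^ 2 = ξ a b j + s :=
    fun a ha b hb => ht _ (hξ a ha b hb)
  have hxc : ∀ a ∈ Icc (0 : ℝ) 1, ∀ b ∈ Icc (0 : ℝ) 1, ∀ i,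
      ‖x a b - c i‖ ^ 2 = ξ a b ⟨q i, mem_range_self i⟩ + s + ‖c i - q i‖ ^ 2 := by
    intro a ha b hb i
    have hmem : x a b - q i ∈ vectorSpan ℝ (range q) ⊔ ℝ ∙ v := by
      rw [show x a b - q i = (p (ξ a b) - q i) + t (ξ a b) • v by simp only [x]; abel]
      refine Submodule.add_mem_sup ?_ (Submodule.smul_mem _ _ (Submodule.mem_span_singleton_self v))
      rw [← direction_affineSpan, ← Subtype.range_coe (s := range q)]
      exact AffineSubspace.vsub_mem_direction (hp _ (hξ a ha b hb))
        (mem_affineSpan ℝ (mem_range_self (⟨q i, mem_range_self i⟩ : range q)))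
    rw [show x a b - c i = (x a b - q i) - (c i - q i) by abel, norm_sub_sq_real,
      Submodule.inner_right_of_mem_orthogonal hmem (hc i), hxq a ha b hb ⟨q i, mem_range_self i⟩]
    ring
  have hx : InjOn (uncurry x) (Icc (0 : ℝ) 1 ×ˢ Icc (0 : ℝ) 1) := by
    rintro ⟨a, b⟩ ⟨ha, hb⟩ ⟨a', b'⟩ ⟨ha', hb'⟩ h
    have h₁ := hxq a ha b hb j₁
    have h₂ := hxq a ha b hb j₂
    rw [show x a b = x a' b' from h, hxq a' ha' b' hb'] at h₁ h₂
    rw [hξ₁, hξ₁] at h₁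
    rw [hξ₂, hξ₂] at h₂
    exact Prod.ext (by linarith) (by linarith)
  have hr i : (∃ r : ℝ → ℝ, ∀ a ∈ Icc (0 : ℝ) 1, ∀ b ∈ Icc (0 : ℝ) 1, ‖x a b - c i‖ ^ 2 = r a) ∨
      ∃ r : ℝ → ℝ, ∀ a ∈ Icc (0 : ℝ) 1, ∀ b ∈ Icc (0 : ℝ) 1, ‖x a b - c i‖ ^ 2 = r b := by
    by_cases hi : ⟨q i, mem_range_self i⟩ = j₁
    · exact .inl ⟨_, fun a ha b hb => by rw [hxc a ha b hb, hi, hξ₁]⟩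
    · refine .inr ⟨fun b => ξ 0 b ⟨q i, mem_range_self i⟩ + s + ‖c i - q i‖ ^ 2,
        fun a ha b hb => ?_⟩
      rw [hxc a ha b hb]
      simp [ξ, hi]
  intro hcover
  obtain ⟨a, -, b, -, hab⟩ := exists_notMem_iUnion_sprays_of_injOn_prod hX
    (Icc_infinite zero_lt_one) not_countable_Icc_zero_one hx hr
  exact hab (hcover ▸ mem_univ _)

end Spray

theorem stmt7 (d n : ℕ) (hd : 3 ≤ d) (hn : d ≤ n)
    (c : Fin n → EuclideanSpace ℝ (Fin d))
    (H L : AffineSubspace ℝ (EuclideanSpace ℝ (Fin d)))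
    (hH : Module.finrank ℝ H.direction = d - 1)
    (hcH : ∀ i, c i ∈ H)
    (hLH : L ≤ H)
    (hL : Module.finrank ℝ L.direction = d - 2)
    -- `q i` is the orthogonal projection of `c i` onto `L`
    (q : Fin n → EuclideanSpace ℝ (Fin d))
    (hq : ∀ i, q i ∈ L ∧ c i - q i ∈ L.directionᗮ)
    (hcard : (Set.range q).ncard ≤ d - 1)
    (X : Fin n → Set (EuclideanSpace ℝ (Fin d)))
    (hX : ∀ i, IsSpray (c i) (X i)) :
    (⋃ i, X i) ≠ Set.univ := by
  have hHtop : H.direction ≠ ⊤ := fun h => by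
    rw [h, finrank_top, finrank_euclideanSpace_fin] at hH; omega
  obtain ⟨v, hvH, hv1⟩ := Submodule.exists_mem_norm_eq_one_of_ne_bot
    (mt Submodule.orthogonal_eq_bot_iff.1 hHtop)
  have hvL : v ∈ L.directionᗮ := Submodule.orthogonal_le (AffineSubspace.direction_le hLH) hvH
  have hperp i : c i - q i ∈ (L.direction ⊔ ℝ ∙ v)ᗮ := by
    rw [← Submodule.inf_orthogonal]
    refine ⟨(hq i).2, Submodule.mem_orthogonal_singleton_iff_inner_left.2 ?_⟩
    exact Submodule.inner_right_of_mem_orthogonal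
      (AffineSubspace.vsub_mem_direction (hcH i) (hLH (hq i).1)) hvH
  have hspan_le : vectorSpan ℝ (range q) ≤ L.direction :=
    vectorSpan_mono ℝ (range_subset_iff.2 fun i => (hq i).1)
  rcases hspan_le.eq_or_lt with hspan | hlt
  · have hne : (range q).Nontrivial := by
      rw [← not_subsingleton_iff, ← vectorSpan_eq_bot_iff_subsingleton ℝ, hspan]
      intro h
      rw [h, finrank_bot] at hL
      omega
    exact iUnion_sprays_ne_univ_of_affineIndependent hX
      ((finite_range q).affineIndependent_of_ncard_le (by rw [hspan, hL]; omega)) hne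
      (hspan ▸ hvL) hv1 (hspan ▸ hperp)
  · have : Nonempty (Fin n) := ⟨⟨0, by omega⟩⟩
    exact iUnion_sprays_ne_univ_of_vectorSpan_lt hX hlt hvL hv1 hperp
end

section
/- Let δ be an ordinal, d ≥ 3, and N = 2(d−1). Suppose u₁, …, u_N are distinct nonzero vectors of ℝ^d, and A₁, …, A_N ⊆ ℝ^d satisfy: for all p ∈ ℝ^d and all 1 ≤ i ≤ N, the set H_{u_i}(p) ∩ A_i has cardinality < ℵ_δ. If 2^ℵ₀ > ℵ_δ, then for every ε > 0 there is Z ⊆ (−ε, ε)^d of cardinality ℵ_{δ+1} such that for all p ∈ ℝ^d the translate p + Z is not contained in A₁ ∪ ⋯ ∪ A_N. -/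
open Cardinal

/-- `Hplane u p` is the hyperplane through `p` orthogonal to `u`. -/
def Hplane {d : ℕ} (u p : EuclideanSpace ℝ (Fin d)) : Set (EuclideanSpace ℝ (Fin d)) :=
  {x | (inner ℝ (x - p) u : ℝ) = 0}

/-!
Splitting the `2(d-1)` directions into two groups of `d-1`, each group spans a proper subspace,
so there are linearly independent `v₁, v₂` such that every `u i` is orthogonal to `v₁` or to `v₂`.
Take `Z = X • v₁ + Y • v₂` with `#X = ℵ_(δ+1)`, `#Y = ℵ_δ` and `X, Y` small positive reals. If
`p + Z` were covered, colour each grid point by an `i` with the point in `A i`. A colour with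
`u i ⟂ v₂` occurs fewer than `ℵ_δ` times on each row (the row lies in a hyperplane normal to `u i`),
so every row `x` has a point `y x` whose colour `i x` satisfies `u i ⟂ v₁`. The `ℵ_(δ+1)` rows are
then distributed over only `ℵ_δ` classes `(i x, y x)`; each class lies on a column, inside a
hyperplane normal to `u (i x)`, so it has fewer than `ℵ_δ` elements, a contradiction.
-/

open Set Function Module
open scoped RealInnerProductSpace

section Coloring

universe v

variable {ι X Y : Type v} [Finite ι] {κ : Cardinal.{v}}

lemma exists_prop_apply_of_small_fibres (hκ : ℵ₀ ≤ κ) (hY : κ ≤ #Y) (f : Y → ι)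
    (P : ι → Prop) (hsmall : ∀ i, ¬ P i → #{y // f y = i} < κ) : ∃ y, P (f y) := by
  have hι : #ι < κ.ord.cof :=
    (lt_aleph0_of_finite ι).trans_le <|
      Ordinal.aleph0_le_cof_iff.2 (Ordinal.one_lt_cof_iff.2 (isSuccLimit_ord hκ))
  obtain ⟨i, hi⟩ := infinite_pigeonhole_card f κ hY hκ hι
  have hPi : P i := by_contra fun hPi => (hsmall i hPi).not_ge hi
  obtain ⟨⟨y, rfl⟩⟩ : Nonempty (f ⁻¹' {i}) :=
    mk_ne_zero_iff.1 (aleph0_pos.trans_le (hκ.trans hi)).ne'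
  exact ⟨y, hPi⟩

theorem false_of_small_rows_of_small_cols (hκ : ℵ₀ ≤ κ) (hX : κ < #X) (hY : #Y = κ)
    (c : X → Y → ι) (P : ι → Prop) (hrow : ∀ x i, ¬ P i → #{y // c x y = i} < κ)
    (hcol : ∀ y i, P i → #{x // c x y = i} < κ) : False := by
  choose g hg using fun x => exists_prop_apply_of_small_fibres hκ hY.ge (c x) P (hrow x)
  have hfibre : ∀ b : ι × Y, #((fun x => (c x (g x), g x)) ⁻¹' {b}) ≤ κ := by
    rintro ⟨i, y⟩
    by_cases hPi : P i
    · refine le_trans (mk_le_mk_of_subset fun x hx => ?_) (hcol y i hPi).le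
      simp only [mem_preimage, mem_singleton_iff, Prod.mk.injEq] at hx
      exact hx.2 ▸ hx.1
    · refine (mk_eq_zero_iff.2 ⟨fun ⟨x, hx⟩ => hPi ?_⟩).trans_le zero_le
      simp only [mem_preimage, mem_singleton_iff, Prod.mk.injEq] at hx
      exact hx.1 ▸ hg x
  have hX' : #X ≤ κ := by
    calc #X ≤ #(ι × Y) * κ := mk_le_mk_mul_of_mk_preimage_le _ hfibre
      _ ≤ (κ * κ) * κ := by
        rw [mk_prod, lift_id, lift_id, hY]
        gcongr
        exact (lt_aleph0_of_finite ι).le.trans hκ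
      _ = κ := by rw [mul_eq_self hκ, mul_eq_self hκ]
  exact hX'.not_gt hX

end Coloring

lemma span_image_ne_top {K V ι : Type*} [DivisionRing K] [AddCommGroup V] [Module K V]
    (u : ι → V) {s : Finset ι} (hs : s.card < finrank K V) : Submodule.span K (u '' s) ≠ ⊤ := by
  classical
  intro htop
  have h := finrank_span_finset_le_card (R := K) (s.image u)
  rw [Finset.coe_image, Set.finrank, htop, finrank_top] at h
  exact (h.trans Finset.card_image_le).not_gt hs

section PairOrthogonal

variable {E : Type*} [NormedAddCommGroup E] [InnerProductSpace ℝ E] [FiniteDimensional ℝ E]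

lemma exists_linearIndependent_pair_orthogonal (hE : 1 < finrank ℝ E) {S₁ S₂ : Submodule ℝ E}
    (h₁ : S₁ ≠ ⊤) (h₂ : S₂ ≠ ⊤) :
    ∃ v₁ v₂ : E, LinearIndependent ℝ ![v₁, v₂] ∧
      ∀ x ∈ (S₁ : Set E) ∪ S₂, ⟪v₁, x⟫ = 0 ∨ ⟪v₂, x⟫ = 0 := by
  obtain ⟨v₁, hv₁, hv₁0⟩ :=
    Submodule.exists_mem_ne_zero_of_ne_bot (mt Submodule.orthogonal_eq_bot_iff.1 h₁)
  obtain ⟨v₂, hv₂, hv₂0⟩ :=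
    Submodule.exists_mem_ne_zero_of_ne_bot (mt Submodule.orthogonal_eq_bot_iff.1 h₂)
  by_cases hind : LinearIndependent ℝ ![v₁, v₂]
  · refine ⟨v₁, v₂, hind, fun x hx => ?_⟩
    rcases hx with hx | hx
    · exact .inl (Submodule.inner_left_of_mem_orthogonal hx hv₁)
    · exact .inr (Submodule.inner_left_of_mem_orthogonal hx hv₂)
  · -- `v₁` is then a multiple of `v₂`, hence orthogonal to both subspaces
    rw [LinearIndependent.pair_symm_iff, LinearIndependent.pair_iff' hv₂0] at hind
    simp only [not_forall, not_not] at hind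
    obtain ⟨a, rfl⟩ := hind
    obtain ⟨w, hw⟩ := exists_linearIndependent_pair_of_one_lt_finrank hE hv₁0
    refine ⟨_, w, hw, fun x hx => .inl ?_⟩
    rcases hx with hx | hx
    · exact Submodule.inner_left_of_mem_orthogonal hx hv₁
    · exact Submodule.inner_left_of_mem_orthogonal hx (Submodule.smul_mem _ a hv₂)

theorem exists_linearIndependent_pair_forall_inner_eq_zero {ι : Type*} [Fintype ι]
    (hE : 1 < finrank ℝ E) (u : ι → E) (hι : Fintype.card ι ≤ 2 * (finrank ℝ E - 1)) :
    ∃ v₁ v₂ : E, LinearIndependent ℝ ![v₁, v₂] ∧ ∀ i, ⟪v₁, u i⟫ = 0 ∨ ⟪v₂, u i⟫ = 0 := by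
  classical
  obtain ⟨s, -, hs⟩ := Finset.exists_subset_card_eq
    (min_le_left (Fintype.card ι) (finrank ℝ E - 1))
  obtain ⟨v₁, v₂, hv, horth⟩ := exists_linearIndependent_pair_orthogonal hE
    (span_image_ne_top u (s := s) (by omega))
    (span_image_ne_top u (s := sᶜ) (by rw [Finset.card_compl]; omega))
  refine ⟨v₁, v₂, hv, fun i => horth _ ?_⟩
  by_cases hi : i ∈ s
  · exact .inl (Submodule.subset_span ⟨i, hi, rfl⟩)
  · exact .inr (Submodule.subset_span ⟨i, by simpa using hi, rfl⟩)

end PairOrthogonal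

def grid_s10 {E : Type*} [AddCommGroup E] [Module ℝ E] (v₁ v₂ : E) (X Y : Set ℝ) : Set E :=
  (fun q : ℝ × ℝ => q.1 • v₁ + q.2 • v₂) '' X ×ˢ Y

lemma mk_grid {E : Type} [AddCommGroup E] [Module ℝ E] {v₁ v₂ : E}
    (hv : LinearIndependent ℝ ![v₁, v₂]) (X Y : Set ℝ) : #(grid_s10 v₁ v₂ X Y) = #X * #Y := by
  rw [grid_s10, mk_image_eq fun q q' h => Prod.ext_iff.2 (hv.eq_of_pair h),
    mk_congr (Equiv.Set.prod X Y), mk_prod, lift_id, lift_id]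

section Euclidean

variable {d : ℕ}

lemma abs_apply_lt_of_mem_grid {v₁ v₂ z : EuclideanSpace ℝ (Fin d)} (hv₁ : v₁ ≠ 0)
    {r : ℝ} {X Y : Set ℝ} (hX : X ⊆ Ioo 0 r) (hY : Y ⊆ Ioo 0 r) (hz : z ∈ grid_s10 v₁ v₂ X Y)
    (j : Fin d) : |z j| < r * (‖v₁‖ + ‖v₂‖) := by
  obtain ⟨⟨x, y⟩, ⟨hx, hy⟩, rfl⟩ := hz
  obtain ⟨⟨hx₀, hxr⟩, ⟨hy₀, hyr⟩⟩ := And.intro (hX hx) (hY hy)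
  have h₁ : x * ‖v₁‖ < r * ‖v₁‖ := mul_lt_mul_of_pos_right hxr (norm_pos_iff.2 hv₁)
  have h₂ : y * ‖v₂‖ ≤ r * ‖v₂‖ := mul_le_mul_of_nonneg_right hyr.le (norm_nonneg _)
  calc |(x • v₁ + y • v₂) j| ≤ ‖x • v₁ + y • v₂‖ :=
      (Real.norm_eq_abs _).symm.trans_le (PiLp.norm_apply_le _ j)
    _ ≤ ‖x • v₁‖ + ‖y • v₂‖ := norm_add_le _ _
    _ = x * ‖v₁‖ + y * ‖v₂‖ := by
      rw [norm_smul, norm_smul, Real.norm_of_nonneg hx₀.le, Real.norm_of_nonneg hy₀.le]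
    _ < r * (‖v₁‖ + ‖v₂‖) := by linarith

lemma mk_le_mk_Hplane_inter {α : Type} {t : α → ℝ} (ht : Injective t)
    {q w u : EuclideanSpace ℝ (Fin d)} (hw : w ≠ 0) (hwu : ⟪w, u⟫ = 0)
    {B : Set (EuclideanSpace ℝ (Fin d))} (hB : ∀ a, q + t a • w ∈ B) :
    #α ≤ #(Hplane u q ∩ B : Set (EuclideanSpace ℝ (Fin d))) := by
  refine mk_le_of_injective (f := fun a => ⟨q + t a • w, ?_, hB a⟩) fun a b hab => ht ?_
  · simp [Hplane, real_inner_smul_left, hwu]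
  · exact smul_left_injective ℝ hw (add_left_cancel (congrArg Subtype.val hab))

theorem not_image_add_grid_subset_iUnion {ι : Type} [Finite ι] {κ : Cardinal.{0}}
    (hκ : ℵ₀ ≤ κ) {u : ι → EuclideanSpace ℝ (Fin d)} {A : ι → Set (EuclideanSpace ℝ (Fin d))}
    (hA : ∀ p i, #(Hplane (u i) p ∩ A i : Set (EuclideanSpace ℝ (Fin d))) < κ)
    {v₁ v₂ : EuclideanSpace ℝ (Fin d)} (hv₁ : v₁ ≠ 0) (hv₂ : v₂ ≠ 0)
    (horth : ∀ i, ⟪v₁, u i⟫ = 0 ∨ ⟪v₂, u i⟫ = 0) {X Y : Set ℝ} (hX : κ < #X) (hY : #Y = κ)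
    (p : EuclideanSpace ℝ (Fin d)) : ¬ (p + ·) '' grid_s10 v₁ v₂ X Y ⊆ ⋃ i, A i := by
  intro hcov
  have hcover : ∀ (x : X) (y : Y), ∃ i, p + (x.1 • v₁ + y.1 • v₂) ∈ A i := fun x y =>
    mem_iUnion.1 (hcov ⟨_, ⟨(x.1, y.1), ⟨x.2, y.2⟩, rfl⟩, rfl⟩)
  choose c hc using hcover
  -- The row `p + x • v₁ + Y • v₂` lies in `Hplane (u i) (p + x • v₁)` whenever `u i ⟂ v₂`,
  -- and the column `p + X • v₁ + y • v₂` in `Hplane (u i) (p + y • v₂)` whenever `u i ⟂ v₁`.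
  refine false_of_small_rows_of_small_cols hκ hX hY c (fun i => ⟪v₁, u i⟫ = 0)
    (fun x i hi => ?_) (fun y i hi => ?_)
  · refine (mk_le_mk_Hplane_inter (q := p + x.1 • v₁) (t := fun y : {y // c x y = i} => y.1.1)
      (Subtype.val_injective.comp Subtype.val_injective) hv₂ ((horth i).resolve_left hi)
      fun y => ?_).trans_lt (hA _ i)
    simpa only [y.2, add_assoc] using hc x y.1
  · refine (mk_le_mk_Hplane_inter (q := p + y.1 • v₂) (t := fun x : {x // c x y = i} => x.1.1)
      (Subtype.val_injective.comp Subtype.val_injective) hv₁ hi fun x => ?_).trans_lt (hA _ i)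
    rw [add_right_comm, add_assoc]
    simpa only [x.2] using hc x.1 y

end Euclidean

theorem stmt10_general (δ : Ordinal) (d : ℕ) (hd : 3 ≤ d)
    (u : Fin (2 * (d - 1)) → EuclideanSpace ℝ (Fin d))
    (A : Fin (2 * (d - 1)) → Set (EuclideanSpace ℝ (Fin d)))
    (hA : ∀ (p : EuclideanSpace ℝ (Fin d)) (i : Fin (2 * (d - 1))),
      Cardinal.mk (Hplane (u i) p ∩ A i : Set (EuclideanSpace ℝ (Fin d))) < aleph δ)
    (hcont : aleph δ < continuum) :
    ∀ ε : ℝ, 0 < ε →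
      ∃ Z : Set (EuclideanSpace ℝ (Fin d)),
        (∀ z ∈ Z, ∀ i, |z i| < ε) ∧
        Cardinal.mk Z = aleph (δ + 1) ∧
        ∀ p : EuclideanSpace ℝ (Fin d), ¬ (p + ·) '' Z ⊆ ⋃ i, A i := by
  intro ε hε
  obtain ⟨v₁, v₂, hv, horth⟩ := exists_linearIndependent_pair_forall_inner_eq_zero
    (by rw [finrank_euclideanSpace_fin]; omega) u (by simp)
  have hv₁ : v₁ ≠ 0 := by simpa using hv.ne_zero 0
  have hv₂ : v₂ ≠ 0 := by simpa using hv.ne_zero 1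
  have hnorm : 0 < ‖v₁‖ + ‖v₂‖ := by positivity
  set r := ε / (‖v₁‖ + ‖v₂‖)
  have hr : 0 < r := div_pos hε hnorm
  obtain ⟨X, hXr, hX⟩ : ∃ X ⊆ Ioo 0 r, #X = aleph (δ + 1) := le_mk_iff_exists_subset.1 <| by
    rw [mk_Ioo_real hr, ← succ_aleph]; exact Order.succ_le_of_lt hcont
  obtain ⟨Y, hYr, hY⟩ : ∃ Y ⊆ Ioo 0 r, #Y = aleph δ := le_mk_iff_exists_subset.1 <| by
    rw [mk_Ioo_real hr]; exact hcont.le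
  refine ⟨grid_s10 v₁ v₂ X Y, fun z hz j => ?_, ?_,
    not_image_add_grid_subset_iUnion (aleph0_le_aleph δ) hA hv₁ hv₂ horth
      (hX ▸ aleph_lt_aleph.2 (Order.lt_add_one_iff.2 le_rfl)) hY⟩
  · simpa [r, div_mul_cancel₀ _ hnorm.ne'] using abs_apply_lt_of_mem_grid hv₁ hXr hYr hz j
  · rw [mk_grid hv, hX, hY, aleph_mul_aleph, max_eq_left le_self_add]

theorem stmt10 (δ : Ordinal) (d : ℕ) (hd : 3 ≤ d)
    (u : Fin (2 * (d - 1)) → EuclideanSpace ℝ (Fin d))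
    (hu : ∀ i, u i ≠ 0) (huinj : Function.Injective u)
    (A : Fin (2 * (d - 1)) → Set (EuclideanSpace ℝ (Fin d)))
    (hA : ∀ (p : EuclideanSpace ℝ (Fin d)) (i : Fin (2 * (d - 1))),
      Cardinal.mk (Hplane (u i) p ∩ A i : Set (EuclideanSpace ℝ (Fin d))) < aleph δ)
    (hcont : aleph δ < continuum) :
    ∀ ε : ℝ, 0 < ε →
      ∃ Z : Set (EuclideanSpace ℝ (Fin d)),
        (∀ z ∈ Z, ∀ i, |z i| < ε) ∧
        Cardinal.mk Z = aleph (δ + 1) ∧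
        ∀ p : EuclideanSpace ℝ (Fin d), ¬ (p + ·) '' Z ⊆ ⋃ i, A i :=
  stmt10_general δ d hd u A hA hcont
end

section
/- Let δ be an ordinal, d ≥ 3, and N = 2(d−1). Suppose u₁, …, u_N are nonzero vectors of ℝ^d and D ⊆ ℝ^d has nonempty interior. If A₁, …, A_N cover D and for all p ∈ ℝ^d and all 1 ≤ i ≤ N the set H_{u_i}(p) ∩ A_i has cardinality < ℵ_δ, then 2^ℵ₀ ≤ ℵ_δ. -/
open Cardinal

/-!
Split the `2(d-1)` directions into two halves of `d - 1 < d` vectors and pick unit vectors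
`a` orthogonal to the first half and `b` orthogonal to the second. A line in direction `b` lies
in every hyperplane `H_{u_i}(p)` with `i` in the second half, so it meets the union of those
`A_i` in fewer than `ℵ_δ` points; symmetrically for lines in direction `a`. Parametrize a small
square `x₀ + s a + t b` inside `D` by `s, t ∈ [0, r/2)`. If `ℵ_δ < 2^ℵ₀`, then `ℵ_δ` many
`b`-lines exclude at most `ℵ_δ` values of `t`; on the `a`-line through a remaining value, these
`ℵ_δ` points all lie in the first-half sets, which meet that line in fewer than `ℵ_δ` points.
-/

universe u

theorem Cardinal.mk_biUnion_finset_lt {α ι : Type*} {κ : Cardinal} (hκ : ℵ₀ ≤ κ)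
    (J : Finset ι) (s : ι → Set α) (h : ∀ i ∈ J, #(s i) < κ) : #(⋃ i ∈ J, s i) < κ := by
  classical
  induction J using Finset.induction_on with
  | empty => simpa using aleph0_pos.trans_le hκ
  | insert i J _ ih =>
    rw [Finset.set_biUnion_insert]
    exact (mk_union_le _ _).trans_lt <| add_lt_of_lt hκ (h i (Finset.mem_insert_self i J))
      (ih fun j hj => h j (Finset.mem_insert_of_mem hj))

theorem Cardinal.mk_le_of_small_sections {α β : Type u} {κ : Cardinal.{u}}
    (hκ : ℵ₀ ≤ κ) (hα : κ ≤ #α) (V H : Set (α × β)) (hcover : ∀ x, x ∈ V ∨ x ∈ H)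
    (hV : ∀ a, #{b | (a, b) ∈ V} < κ) (hH : ∀ b, #{a | (a, b) ∈ H} < κ) : #β ≤ κ := by
  by_contra! hβ
  obtain ⟨X, hX⟩ := le_mk_iff_exists_set.1 hα
  have hbad : #(⋃ a ∈ X, {b | (a, b) ∈ V}) ≤ κ := calc
    _ ≤ #X * ⨆ a : X, #{b | ((a : α), b) ∈ V} := mk_biUnion_le (fun a => {b | (a, b) ∈ V}) X
    _ ≤ κ * κ := mul_le_mul' hX.le (ciSup_le' fun a => (hV a).le)
    _ = κ := mul_eq_self hκ
  obtain ⟨b₀, hb₀⟩ : ∃ b₀, b₀ ∉ ⋃ a ∈ X, {b | (a, b) ∈ V} := by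
    by_contra! h
    exact (hbad.trans_lt hβ).ne (by rw [Set.eq_univ_of_forall h, mk_univ])
  have hXH : X ⊆ {a | (a, b₀) ∈ H} := fun a ha =>
    (hcover (a, b₀)).resolve_left fun hV => hb₀ (Set.mem_biUnion ha hV)
  exact (hX.symm.le.trans (mk_le_mk_of_subset hXH)).not_gt (hH b₀)

theorem exists_norm_eq_one_forall_inner_eq_zero {E ι : Type*} [NormedAddCommGroup E]
    [InnerProductSpace ℝ E] [FiniteDimensional ℝ E] (v : ι → E) (J : Finset ι)
    (hJ : J.card < Module.finrank ℝ E) :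
    ∃ b : E, ‖b‖ = 1 ∧ ∀ i ∈ J, (inner ℝ (v i) b : ℝ) = 0 := by
  let f : E →ₗ[ℝ] J → ℝ := LinearMap.pi fun i => innerₛₗ ℝ (v i)
  obtain ⟨b, hb, hb0⟩ := Submodule.ne_bot_iff _ |>.1 <|
    LinearMap.ker_ne_bot_of_finrank_lt (f := f) (by simpa using hJ)
  refine ⟨‖b‖⁻¹ • b, norm_smul_inv_norm hb0, fun i hi => ?_⟩
  rw [inner_smul_right, show (inner ℝ (v i) b : ℝ) = 0 from congrFun hb ⟨i, hi⟩, mul_zero]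

theorem add_smul_mem_Hplane {d : ℕ} {u v : EuclideanSpace ℝ (Fin d)} (h : (inner ℝ u v : ℝ) = 0)
    (p : EuclideanSpace ℝ (Fin d)) (t : ℝ) : p + t • v ∈ Hplane u p := by
  rw [Hplane, Set.mem_ofPred_eq, add_sub_cancel_left, real_inner_smul_left, real_inner_comm, h,
    mul_zero]

theorem mk_setOf_add_smul_mem_biUnion_lt {d : ℕ} {ι : Type*} {κ : Cardinal} (hκ : ℵ₀ ≤ κ)
    (u : ι → EuclideanSpace ℝ (Fin d)) (A : ι → Set (EuclideanSpace ℝ (Fin d))) (J : Finset ι)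
    (p v : EuclideanSpace ℝ (Fin d)) (hv : v ≠ 0) (hJ : ∀ i ∈ J, (inner ℝ (u i) v : ℝ) = 0)
    (hA : ∀ i ∈ J, #(Hplane (u i) p ∩ A i : Set _) < κ) (I : Set ℝ) :
    #{t : I | p + (t : ℝ) • v ∈ ⋃ i ∈ J, A i} < κ := by
  let ℓ : I → EuclideanSpace ℝ (Fin d) := fun t => p + (t : ℝ) • v
  have hℓ : Function.Injective ℓ :=
    fun s t hst => Subtype.ext <| smul_left_injective ℝ hv (add_left_cancel hst)
  have hsub : ℓ ⁻¹' (⋃ i ∈ J, A i) ⊆ ℓ ⁻¹' (⋃ i ∈ J, (Hplane (u i) p ∩ A i)) := by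
    intro t ht
    obtain ⟨i, hi, hti⟩ := Set.mem_iUnion₂.1 ht
    exact Set.mem_biUnion hi ⟨add_smul_mem_Hplane (hJ i hi) p t, hti⟩
  calc #(ℓ ⁻¹' (⋃ i ∈ J, A i))
      ≤ #(ℓ ⁻¹' (⋃ i ∈ J, (Hplane (u i) p ∩ A i))) := mk_le_mk_of_subset hsub
    _ ≤ #(⋃ i ∈ J, (Hplane (u i) p ∩ A i) : Set _) := mk_preimage_of_injective ℓ _ hℓ
    _ < κ := mk_biUnion_finset_lt hκ J _ hA

theorem stmt11_general (δ : Ordinal) (d : ℕ) (hd : 3 ≤ d)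
    (u : Fin (2 * (d - 1)) → EuclideanSpace ℝ (Fin d))
    (D : Set (EuclideanSpace ℝ (Fin d))) (hD : (interior D).Nonempty)
    (A : Fin (2 * (d - 1)) → Set (EuclideanSpace ℝ (Fin d)))
    (hcover : D ⊆ ⋃ i, A i)
    (hA : ∀ (p : EuclideanSpace ℝ (Fin d)) (i : Fin (2 * (d - 1))),
      Cardinal.mk (Hplane (u i) p ∩ A i : Set (EuclideanSpace ℝ (Fin d))) < aleph δ) :
    continuum ≤ aleph δ := by
  have hκ : ℵ₀ ≤ aleph δ := aleph0_le_aleph δ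
  obtain ⟨x₀, r, hr, hball⟩ : ∃ x₀, ∃ r > 0, Metric.ball x₀ r ⊆ D := by
    obtain ⟨x₀, hx₀⟩ := hD
    obtain ⟨r, hr, hball⟩ := Metric.isOpen_iff.1 isOpen_interior x₀ hx₀
    exact ⟨x₀, r, hr, hball.trans interior_subset⟩
  let J : Finset (Fin (2 * (d - 1))) := {i | i < d - 1}
  have hJ : J.card = d - 1 := by simp only [J, Fin.card_filter_val_lt]; omega
  obtain ⟨a, ha, haJ⟩ := exists_norm_eq_one_forall_inner_eq_zero u J
    (by rw [hJ, finrank_euclideanSpace_fin]; omega)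
  obtain ⟨b, hb, hbJ⟩ := exists_norm_eq_one_forall_inner_eq_zero u Jᶜ
    (by rw [Finset.card_compl, hJ, Fintype.card_fin, finrank_euclideanSpace_fin]; omega)
  let I := Set.Ico 0 (r / 2)
  have hsquare : ∀ s t : I, x₀ + (s : ℝ) • a + (t : ℝ) • b ∈ D := by
    rintro ⟨s, hs0, hs⟩ ⟨t, ht0, ht⟩
    refine hball ?_
    rw [Metric.mem_ball, dist_eq_norm, add_assoc, add_sub_cancel_left]
    calc ‖s • a + t • b‖ ≤ ‖s • a‖ + ‖t • b‖ := norm_add_le _ _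
      _ = s + t := by rw [norm_smul, norm_smul, ha, hb, Real.norm_of_nonneg hs0,
            Real.norm_of_nonneg ht0, mul_one, mul_one]
      _ < r := by linarith
  rcases le_total continuum (aleph δ) with h | h
  · exact h
  rw [← mk_Ico_real (half_pos hr)] at h ⊢
  refine mk_le_of_small_sections hκ h
    {x : I × I | x₀ + (x.1 : ℝ) • a + (x.2 : ℝ) • b ∈ ⋃ i ∈ Jᶜ, A i}
    {x : I × I | x₀ + (x.1 : ℝ) • a + (x.2 : ℝ) • b ∈ ⋃ i ∈ J, A i} ?_ ?_ ?_
  · rintro ⟨s, t⟩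
    obtain ⟨i, hi⟩ := Set.mem_iUnion.1 (hcover (hsquare s t))
    by_cases hiJ : i ∈ J
    · exact Or.inr (Set.mem_biUnion hiJ hi)
    · exact Or.inl (Set.mem_biUnion (Finset.mem_compl.2 hiJ) hi)
  · intro s
    exact mk_setOf_add_smul_mem_biUnion_lt hκ u A Jᶜ (x₀ + (s : ℝ) • a) b
      (norm_ne_zero_iff.1 (hb ▸ one_ne_zero)) hbJ (fun i _ => hA _ i) I
  · intro t
    have := mk_setOf_add_smul_mem_biUnion_lt hκ u A J (x₀ + (t : ℝ) • b) a
      (norm_ne_zero_iff.1 (ha ▸ one_ne_zero)) haJ (fun i _ => hA _ i) I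
    simp only [add_right_comm x₀ ((t : ℝ) • b)] at this
    exact this

theorem stmt11 (δ : Ordinal) (d : ℕ) (hd : 3 ≤ d)
    (u : Fin (2 * (d - 1)) → EuclideanSpace ℝ (Fin d))
    (hu : ∀ i, u i ≠ 0)
    (D : Set (EuclideanSpace ℝ (Fin d))) (hD : (interior D).Nonempty)
    (A : Fin (2 * (d - 1)) → Set (EuclideanSpace ℝ (Fin d)))
    (hcover : D ⊆ ⋃ i, A i)
    (hA : ∀ (p : EuclideanSpace ℝ (Fin d)) (i : Fin (2 * (d - 1))),
      Cardinal.mk (Hplane (u i) p ∩ A i : Set (EuclideanSpace ℝ (Fin d))) < aleph δ) :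
    continuum ≤ aleph δ :=
  stmt11_general δ d hd u D hD A hcover hA
end

section
/- Suppose u₁, u₂, u₃, u₄ are nonzero vectors of ℝ³. Then there are no sets A₁, A₂, A₃, A₄ covering ℝ³ such that H_{u_i}(p) ∩ A_i is finite for all p ∈ ℝ³ and all 1 ≤ i ≤ 4. -/
theorem exists_ne_zero_inner_eq_zero_of_two_lt_finrank {E : Type*} [NormedAddCommGroup E]
    [InnerProductSpace ℝ E] [FiniteDimensional ℝ E] (hE : 2 < Module.finrank ℝ E) (a b : E) :
    ∃ v : E, v ≠ 0 ∧ inner ℝ v a = 0 ∧ inner ℝ v b = 0 := by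
  set K := Submodule.span ℝ (Set.range ![a, b])
  have hK : K ≠ ⊤ := by
    intro h
    have hle : Module.finrank ℝ K ≤ 2 :=
      (finrank_range_le_card (R := ℝ) ![a, b]).trans_eq (Fintype.card_fin 2)
    rw [h, finrank_top] at hle
    omega
  obtain ⟨v, hvK, hv⟩ := Submodule.exists_mem_ne_zero_of_ne_bot
    (mt Submodule.orthogonal_eq_bot_iff.mp hK)
  have hperp (x : E) (hx : x ∈ Set.range ![a, b]) : inner ℝ v x = 0 := by
    rw [real_inner_comm]
    exact (Submodule.mem_orthogonal K v).mp hvK x (Submodule.subset_span hx)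
  exact ⟨v, hv, hperp a ⟨0, rfl⟩, hperp b ⟨1, rfl⟩⟩

theorem union_ne_univ_of_countable_rows_of_finite_cols {α β : Type*} [Uncountable α]
    [Infinite β] (R C : Set (α × β)) (hR : ∀ b, {a | (a, b) ∈ R}.Countable)
    (hC : ∀ a, {b | (a, b) ∈ C}.Finite) : R ∪ C ≠ Set.univ := by
  intro hcover
  let e := Infinite.natEmbedding β
  obtain ⟨a, ha⟩ : ∃ a, a ∉ ⋃ n, {a | (a, e n) ∈ R} :=
    Set.ne_univ_iff_exists_notMem _ |>.mp fun h =>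
      Set.not_countable_univ (h ▸ Set.countable_iUnion fun n => hR (e n))
  refine Set.infinite_range_of_injective e.injective ((hC a).subset ?_)
  rintro _ ⟨n, rfl⟩
  have : (a, e n) ∈ R ∪ C := hcover ▸ Set.mem_univ _
  exact this.resolve_left fun h => ha (Set.mem_iUnion.mpr ⟨n, h⟩)

theorem Hplane.finite_setOf_add_smul_mem {d : ℕ} {u v p : EuclideanSpace ℝ (Fin d)}
    {A : Set (EuclideanSpace ℝ (Fin d))} (hv : v ≠ 0) (hvu : inner ℝ v u = 0)
    (hA : (Hplane u p ∩ A).Finite) : {s : ℝ | p + s • v ∈ A}.Finite := by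
  have hinj : Function.Injective fun s : ℝ => p + s • v :=
    fun s t h => smul_left_injective ℝ hv (add_left_cancel h)
  refine (hA.preimage hinj.injOn).subset fun s hs => ⟨?_, hs⟩
  simp [Hplane, inner_smul_left, hvu]

theorem stmt15_general (u : Fin 4 → EuclideanSpace ℝ (Fin 3))
    (A : Fin 4 → Set (EuclideanSpace ℝ (Fin 3)))
    (hA : ∀ (p : EuclideanSpace ℝ (Fin 3)) (i : Fin 4), (Hplane (u i) p ∩ A i).Finite) :
    (⋃ i, A i) ≠ Set.univ := by
  intro hcover
  have h3 : 2 < Module.finrank ℝ (EuclideanSpace ℝ (Fin 3)) := by simp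
  obtain ⟨v, hv, hv0, hv1⟩ := exists_ne_zero_inner_eq_zero_of_two_lt_finrank h3 (u 0) (u 1)
  obtain ⟨w, hw, hw2, hw3⟩ := exists_ne_zero_inner_eq_zero_of_two_lt_finrank h3 (u 2) (u 3)
  apply union_ne_univ_of_countable_rows_of_finite_cols
    {x : ℝ × ℝ | x.2 • w + x.1 • v ∈ A 0 ∪ A 1} {x | x.1 • v + x.2 • w ∈ A 2 ∪ A 3}
  · intro t
    exact ((Hplane.finite_setOf_add_smul_mem hv hv0 (hA (t • w) 0)).union
      (Hplane.finite_setOf_add_smul_mem hv hv1 (hA (t • w) 1))).countable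
  · intro s
    exact (Hplane.finite_setOf_add_smul_mem hw hw2 (hA (s • v) 2)).union
      (Hplane.finite_setOf_add_smul_mem hw hw3 (hA (s • v) 3))
  · refine Set.eq_univ_of_forall fun ⟨s, t⟩ => ?_
    obtain ⟨i, hi⟩ := Set.mem_iUnion.mp (hcover ▸ Set.mem_univ (s • v + t • w))
    fin_cases i
    · exact Or.inl (Or.inl (add_comm (s • v) _ ▸ hi))
    · exact Or.inl (Or.inr (add_comm (s • v) _ ▸ hi))
    · exact Or.inr (Or.inl hi)
    · exact Or.inr (Or.inr hi)

theorem stmt15 (u : Fin 4 → EuclideanSpace ℝ (Fin 3)) (hu : ∀ i, u i ≠ 0)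
    (A : Fin 4 → Set (EuclideanSpace ℝ (Fin 3)))
    (hA : ∀ (p : EuclideanSpace ℝ (Fin 3)) (i : Fin 4), (Hplane (u i) p ∩ A i).Finite) :
    (⋃ i, A i) ≠ Set.univ :=
  stmt15_general u A hA
end

section
/- Let ε > 0 and let κ be a cardinal. For every set X ⊆ ℝ with ℵ₀ ≤ |X| < κ ≤ 2^ℵ₀, there is a set S ⊆ (−ε, ε) with |S| = κ and (X − X) ∩ (S − S) = {0}, where X − X = {x − y : x, y ∈ X} and S − S = {s − t : s, t ∈ S}. -/
open Cardinal Pointwise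

/-!
Let `G` be an additive subgroup of `ℝ` containing `X` with `#G = #X`; the subfield `ℚ(X)` will do.
Each coset of `G` has fewer than `𝔠` elements, so `(-ε, ε)` meets `𝔠` cosets of `G`. Choosing one
point in each of `κ` of them gives `S`: two points of `S` whose difference lies in `G ⊇ X - X` lie
in the same coset, hence coincide.
-/

namespace QuotientAddGroup

variable {A : Type*} [AddGroup A]

theorem mk_le_mk_image_mk_mul (G : AddSubgroup A) (I : Set A) :
    #I ≤ #((mk : A → A ⧸ G) '' I) * #G := by
  refine mk_le_mk_mul_of_mk_preimage_le (Set.imageFactorization mk I) fun c => ?_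
  calc #(Set.imageFactorization mk I ⁻¹' {c})
      ≤ #((mk : A → A ⧸ G) ⁻¹' {c.1}) :=
        mk_le_of_injective (f := fun x => ⟨x.1.1, congrArg Subtype.val x.2⟩)
          fun x y h => Subtype.ext <| Subtype.ext <| Subtype.mk.inj h
    _ = #G := by
        rw [mk_congr (preimageMkEquivAddSubgroupProdSet G {c.1}), mk_prod, mk_singleton,
          lift_one, lift_id, mul_one]

theorem exists_subset_injOn_mk_of_mk_lt {G : AddSubgroup A} {I : Set A} {κ : Cardinal}
    (hI : ℵ₀ ≤ #I) (hG : #G < #I) (hκ : κ ≤ #I) :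
    ∃ S ⊆ I, #S = κ ∧ Set.InjOn (mk : A → A ⧸ G) S := by
  obtain ⟨T, hTI, hT⟩ := Set.exists_subset_bijOn I (mk : A → A ⧸ G)
  have hTcard : #T = #(mk '' I : Set (A ⧸ G)) := by
    rw [← hT.image_eq, mk_image_eq_of_injOn _ _ hT.injOn]
  have hIT : #I ≤ #T := by
    by_contra! hlt
    exact (mk_le_mk_image_mk_mul G I).not_gt (hTcard ▸ mul_lt_of_lt hI hlt hG)
  obtain ⟨S, hST, hS⟩ := le_mk_iff_exists_subset.mp (hκ.trans hIT)
  exact ⟨S, hST.trans hTI, hS, hT.injOn.mono hST⟩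

theorem sub_inter_sub_eq_zero_of_injOn_mk {G : AddSubgroup A} [G.Normal] {X S : Set A}
    (hXG : X ⊆ G) (hX : X.Nonempty) (hS : S.Nonempty) (hinj : Set.InjOn (mk : A → A ⧸ G) S) :
    (X - X) ∩ (S - S) = {0} := by
  refine Set.Subset.antisymm ?_ (Set.singleton_subset_iff.mpr ⟨hX.zero_mem_sub, hS.zero_mem_sub⟩)
  rintro _ ⟨⟨x, hx, y, hy, hxy⟩, s, hs, t, ht, rfl⟩
  dsimp only at hxy ⊢
  have hmk : (mk s : A ⧸ G) = mk t := eq_iff_sub_mem.mpr (hxy ▸ sub_mem (hXG hx) (hXG hy))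
  rw [hinj hs ht hmk, sub_self, Set.mem_singleton_iff]

end QuotientAddGroup

theorem stmt18 (ε : ℝ) (hε : 0 < ε) (κ : Cardinal) (X : Set ℝ)
    (h1 : ℵ₀ ≤ Cardinal.mk X) (h2 : Cardinal.mk X < κ) (h3 : κ ≤ continuum) :
    ∃ S : Set ℝ, S ⊆ Set.Ioo (-ε) ε ∧ Cardinal.mk S = κ ∧
      (X - X) ∩ (S - S) = {0} := by
  have : Infinite X := infinite_iff.mpr h1
  have hI : #(Set.Ioo (-ε) ε) = 𝔠 := mk_Ioo_real (by linarith)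
  set F := (Subfield.closure X).toAddSubgroup
  have hF : #F < #(Set.Ioo (-ε) ε) :=
    hI ▸ (Subfield.cardinalMk_closure X).trans_lt (h2.trans_le h3)
  obtain ⟨S, hSI, hSκ, hinj⟩ :=
    QuotientAddGroup.exists_subset_injOn_mk_of_mk_lt (hI ▸ aleph0_le_continuum) hF (hI ▸ h3)
  have hS : S.Nonempty := by
    rw [← Set.nonempty_coe_sort, ← mk_ne_zero_iff, hSκ]
    exact (h2.trans_le' zero_le).ne'
  exact ⟨S, hSI, hSκ, QuotientAddGroup.sub_inter_sub_eq_zero_of_injOn_mk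
    Subfield.subset_closure (Set.nonempty_coe_sort.mp inferInstance) hS hinj⟩
end
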